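/- arXiv:math/0703255 — 15 statements merged into one kernel-verified Lean document; each statement's English description precedes it below -/
import Mathlib

section
/- For every natural number n, the sum over k of binom(n,k)^2 * binom(3k, 2n) equals the sum over k of binom(n,k)^2 * binom(2k,k); that is, ∑_{k=0}^{n} C(n,k)^2 C(3k,2n) = ∑_{k=0}^{n} C(n,k)^2 C(2k,k). -/
/-!
Expanding `C(3k, 2n) = ∑_b C(k, b) C(2k, 2n - b)` by Vandermonde's identity and exchanging the
sums, it suffices to show that for every `b ≤ n`
  `∑_k C(n, k)² C(k, b) C(2k, 2n - b) = C(n, b)² C(2b, b)`,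
whose sum over `b` is the right-hand side. After writing
`C(n, k) C(k, b) = C(n, b) C(n - b, n - k)`, a second Vandermonde expansion of `C(2k, 2n - b)`
and another exchange of sums reduce this to Surányi's identity
  `∑_t C(m, t) C(u, t) C(m + u + p - t, m + u) = C(m + p, m) C(u + p, u)`
(three more applications of Vandermonde) and finally to `∑_u C(b, u)² = C(2b, b)`.
-/

open Finset

namespace Nat

theorem choose_mul_eq_choose_mul_choose_sub_sub {n k : ℕ} (b : ℕ) (hk : k ≤ n) :
    n.choose k * k.choose b = n.choose b * (n - b).choose (n - k) := by
  rcases le_or_gt b k with hbk | hkb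
  · rw [choose_mul hbk, ← choose_symm (by omega : k - b ≤ n - b),
      show n - b - (k - b) = n - k by omega]
  rcases le_or_gt b n with hbn | hnb
  · rw [choose_eq_zero_of_lt hkb, choose_eq_zero_of_lt (by omega : n - b < n - k),
      Nat.mul_zero, Nat.mul_zero]
  · rw [choose_eq_zero_of_lt hkb, choose_eq_zero_of_lt hnb, Nat.mul_zero, Nat.zero_mul]

theorem choose_mul_choose_sub_comm (n i j : ℕ) :
    n.choose i * (n - i).choose j = n.choose j * (n - j).choose i := by
  have hi := choose_mul (n := n) (Nat.le_add_right i j)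
  have hj := choose_mul (n := n) (Nat.le_add_left j i)
  rw [Nat.add_sub_cancel_left] at hi
  rw [Nat.add_sub_cancel] at hj
  rw [← hi, ← hj, choose_symm_add]

theorem add_choose_eq_sum_range_of_le {m n k N : ℕ} (hm : m ≤ N) (hN : N ≤ k) :
    (m + n).choose k = ∑ j ∈ range (N + 1), m.choose j * n.choose (k - j) := by
  rw [add_choose_eq, Nat.sum_antidiagonal_eq_sum_range_succ_mk,
    eventually_constant_sum (N := N + 1) (fun j hj => ?_) (by omega)]
  rw [choose_eq_zero_of_lt (by omega : m < j), Nat.zero_mul]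

theorem sum_range_choose_mul_choose {n N : ℕ} (m : ℕ) (hn : n ≤ N) :
    ∑ t ∈ range (N + 1), m.choose t * n.choose t = (m + n).choose n := by
  rw [eventually_constant_sum (N := n + 1) (fun t ht => ?_) (by omega), add_choose_eq,
    Nat.sum_antidiagonal_eq_sum_range_succ_mk]
  · refine sum_congr rfl fun t ht => ?_
    rw [choose_symm (mem_range_succ_iff.mp ht)]
  · rw [choose_eq_zero_of_lt (by omega : n < t), Nat.mul_zero]

theorem sum_range_choose_mul_choose_mul_choose_sub (m u p : ℕ) :
    ∑ t ∈ range (u + 1), m.choose t * u.choose t * (m + u + p - t).choose (m + u) =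
      (m + p).choose m * (u + p).choose u := by
  calc _ = ∑ t ∈ range (u + 1), ∑ j ∈ range (u + 1),
          m.choose t * (u.choose j * (u - j).choose t) * (m + p).choose (m + u - j) := by
        refine sum_congr rfl fun t ht => ?_
        have ht : t ≤ u := mem_range_succ_iff.mp ht
        rw [show m + u + p - t = u - t + (m + p) by omega,
          add_choose_eq_sum_range_of_le (N := u) (by omega) (by omega), mul_sum]
        refine sum_congr rfl fun j _ => ?_
        rw [← choose_mul_choose_sub_comm]
        ring
    _ = ∑ j ∈ range (u + 1), u.choose j * (m + p).choose (m + u - j) *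
          ∑ t ∈ range (u + 1), m.choose t * (u - j).choose t := by
        rw [sum_comm]
        refine sum_congr rfl fun j _ => ?_
        rw [mul_sum]
        refine sum_congr rfl fun t _ => ?_
        ring
    _ = ∑ j ∈ range (u + 1), (m + p).choose m * (u.choose j * p.choose (u - j)) := by
        refine sum_congr rfl fun j hj => ?_
        have hj : j ≤ u := mem_range_succ_iff.mp hj
        have h := choose_mul (n := m + p) (Nat.le_add_right m (u - j))
        rw [Nat.add_sub_cancel_left, Nat.add_sub_cancel_left, choose_symm_add] at h
        rw [sum_range_choose_mul_choose _ (Nat.sub_le u j), show m + u - j = m + (u - j) by omega,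
          Nat.mul_assoc, h]
        ring
    _ = (m + p).choose m * (u + p).choose u := by
        rw [← mul_sum, ← add_choose_eq_sum_range_of_le le_rfl le_rfl]

theorem sum_range_choose_mul_choose_mul_choose_sub_of_le {n b u : ℕ} (hb : b ≤ n)
    (hu : u ≤ n) :
    ∑ t ∈ range (n + 1), (n - b).choose t * u.choose t * (n - t).choose (n - b + u) =
      (n - u).choose (n - b) * b.choose u := by
  rcases le_or_gt u b with hub | hbu
  · have h := sum_range_choose_mul_choose_mul_choose_sub (n - b) u (b - u)
    rw [show n - b + u + (b - u) = n by omega, show n - b + (b - u) = n - u by omega,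
      show u + (b - u) = b by omega] at h
    rw [eventually_constant_sum (N := u + 1) (fun t ht => ?_) (by omega), h]
    rw [choose_eq_zero_of_lt (by omega : u < t), Nat.mul_zero, Nat.zero_mul]
  · rw [choose_eq_zero_of_lt hbu, Nat.mul_zero]
    refine sum_eq_zero fun t _ => ?_
    rw [choose_eq_zero_of_lt (by omega : n - t < n - b + u), Nat.mul_zero]

theorem sum_range_choose_mul_choose_sub_mul_two_mul_choose {n b : ℕ} (hb : b ≤ n) :
    ∑ t ∈ range (n + 1), n.choose t * (n - b).choose t * (2 * (n - t)).choose (2 * n - b) =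
      n.choose b * (2 * b).choose b := by
  calc _ = ∑ t ∈ range (n + 1), ∑ j ∈ range (n + 1), n.choose (n - j) * (n - j).choose t *
          (n - b).choose t * (n - t).choose (2 * n - b - j) := by
        refine sum_congr rfl fun t ht => ?_
        have ht : t ≤ n := mem_range_succ_iff.mp ht
        rw [two_mul (n - t), add_choose_eq_sum_range_of_le (N := n) (by omega) (by omega), mul_sum]
        refine sum_congr rfl fun j hj => ?_
        have hj : j ≤ n := mem_range_succ_iff.mp hj
        rw [choose_mul_eq_choose_mul_choose_sub_sub t (Nat.sub_le n j), Nat.sub_sub_self hj]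
        ring
    _ = ∑ j ∈ range (n + 1), n.choose (n - j) * ∑ t ∈ range (n + 1),
          (n - b).choose t * (n - j).choose t * (n - t).choose (2 * n - b - j) := by
        rw [sum_comm]
        refine sum_congr rfl fun j _ => ?_
        rw [mul_sum]
        refine sum_congr rfl fun t _ => ?_
        ring
    _ = ∑ u ∈ range (n + 1), n.choose u * ∑ t ∈ range (n + 1),
          (n - b).choose t * u.choose t * (n - t).choose (n - b + u) := by
        rw [← sum_range_reflect]
        refine sum_congr rfl fun u hu => ?_
        have hu : u ≤ n := mem_range_succ_iff.mp hu
        rw [show n + 1 - 1 - u = n - u by omega, Nat.sub_sub_self hu,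
          show 2 * n - b - (n - u) = n - b + u by omega]
    _ = ∑ u ∈ range (n + 1), n.choose b * (b.choose u * b.choose u) := by
        refine sum_congr rfl fun u hu => ?_
        rw [sum_range_choose_mul_choose_mul_choose_sub_of_le hb (mem_range_succ_iff.mp hu),
          ← Nat.mul_assoc, ← choose_mul_eq_choose_mul_choose_sub_sub u hb]
        ring
    _ = n.choose b * (2 * b).choose b := by
        rw [← mul_sum, sum_range_choose_mul_choose _ hb, two_mul]

theorem sum_range_choose_sq_mul_choose_mul_two_mul_choose {n b : ℕ} (hb : b ≤ n) :
    ∑ k ∈ range (n + 1), n.choose k ^ 2 * (k.choose b * (2 * k).choose (2 * n - b)) =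
      n.choose b ^ 2 * (2 * b).choose b := by
  rw [← sum_range_reflect, sq, Nat.mul_assoc,
    ← sum_range_choose_mul_choose_sub_mul_two_mul_choose hb, mul_sum]
  refine sum_congr rfl fun t ht => ?_
  have ht : t ≤ n := mem_range_succ_iff.mp ht
  have h := choose_mul_eq_choose_mul_choose_sub_sub b (Nat.sub_le n t)
  rw [Nat.sub_sub_self ht] at h
  rw [show n + 1 - 1 - t = n - t by omega]
  calc _ = n.choose (n - t) * (n - t).choose b * n.choose (n - t) *
        (2 * (n - t)).choose (2 * n - b) := by ring
    _ = _ := by rw [h, choose_symm ht]; ring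

end Nat

theorem stmt_0 (n : ℕ) :
    ∑ k ∈ Finset.range (n + 1), (n.choose k) ^ 2 * ((3 * k).choose (2 * n)) =
      ∑ k ∈ Finset.range (n + 1), (n.choose k) ^ 2 * ((2 * k).choose k) := by
  calc _ = ∑ k ∈ range (n + 1), ∑ b ∈ range (n + 1),
          n.choose k ^ 2 * (k.choose b * (2 * k).choose (2 * n - b)) := by
        refine sum_congr rfl fun k hk => ?_
        rw [show 3 * k = k + 2 * k by ring,
          Nat.add_choose_eq_sum_range_of_le (mem_range_succ_iff.mp hk) (by omega), mul_sum]
    _ = _ := by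
        rw [sum_comm]
        exact sum_congr rfl fun b hb =>
          Nat.sum_range_choose_sq_mul_choose_mul_two_mul_choose (mem_range_succ_iff.mp hb)
end

section
/- For every natural number n, ∑_{k=0}^{n} (-1)^{n+k} C(n,k) C(n+k,n)^2 = ∑_{k=0}^{n} C(n,k)^2 C(n+k,n), as integers. -/
/-!
Expand one factor `C(n+k,n)` by Vandermonde as `∑ᵢ C(n,i) C(k,i)`. For fixed `i` the remaining
alternating sum over `k` is, after `C(n,k) C(k,i) = C(n,i) C(n-i,k-i)`, an `(n-i)`-th forward
difference of `x ↦ C(x+n+i, n)`, which equals `C(n+i, i)`. So the left side collapses to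
`∑ᵢ C(n,i)² C(n+i,n)`.
-/

open Finset

theorem neg_one_pow_add_eq_neg_one_pow_sub {R : Type*} [Monoid R] [HasDistribNeg R] {m n : ℕ}
    (h : n ≤ m) : (-1 : R) ^ (m + n) = (-1) ^ (m - n) := by
  rw [show m + n = m - n + 2 * n by omega, pow_add, pow_mul, neg_one_sq, one_pow, mul_one]

theorem Nat.add_choose_left_eq_sum_choose_mul_choose (n k : ℕ) :
    (n + k).choose n = ∑ i ∈ range (n + 1), n.choose i * k.choose i := by
  rw [add_choose_eq, ← Nat.sum_antidiagonal_swap]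
  simp only [Prod.fst_swap, Prod.snd_swap]
  rw [Nat.sum_antidiagonal_eq_sum_range_succ (fun i j => n.choose j * k.choose i)]
  refine sum_congr rfl fun i hi => ?_
  rw [choose_symm (mem_range_succ_iff.mp hi)]

theorem sum_range_neg_one_pow_mul_choose_mul_add_choose (N a j : ℕ) :
    ∑ m ∈ range (N + 1), (-1 : ℤ) ^ (N - m) * N.choose m * (m + a).choose (N + j) =
      a.choose j := by
  simpa [fwdDiff_iter_eq_sum_shift, add_comm a] using congr_fun (fwdDiff_iter_choose j N) a

theorem sum_range_neg_one_pow_mul_choose_mul_choose_mul_add_choose {n i : ℕ} (hi : i ≤ n)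
    (a j : ℕ) :
    ∑ k ∈ range (n + 1), (-1 : ℤ) ^ (n - k) * n.choose k * k.choose i * (k + a).choose (n + j) =
      n.choose i * (a + i).choose (i + j) := by
  obtain ⟨N, rfl⟩ := Nat.exists_eq_add_of_le hi
  rw [add_assoc, sum_range_add, sum_eq_zero fun k hk => by
      simp [Nat.choose_eq_zero_of_lt (mem_range.mp hk)], zero_add,
    ← sum_range_neg_one_pow_mul_choose_mul_add_choose N (a + i) (i + j), mul_sum]
  refine sum_congr rfl fun m _ => ?_
  have hchoose : (i + N).choose (i + m) * (i + m).choose i = (i + N).choose i * N.choose m := by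
    simpa using Nat.choose_mul (n := i + N) (k := i + m) (s := i) (Nat.le_add_right i m)
  rw [Nat.add_sub_add_left, show i + m + a = m + (a + i) by ring,
    show i + N + j = N + (i + j) by ring, mul_assoc _ _ ((i + m).choose i : ℤ),
    ← Nat.cast_mul, hchoose]
  push_cast
  ring

theorem stmt_1 (n : ℕ) :
    ∑ k ∈ Finset.range (n + 1),
        (-1 : ℤ) ^ (n + k) * (n.choose k) * ((n + k).choose n) ^ 2 =
      ∑ k ∈ Finset.range (n + 1), ((n.choose k : ℤ)) ^ 2 * ((n + k).choose n) := by
  have inner (i : ℕ) (hi : i ∈ range (n + 1)) :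
      ∑ k ∈ range (n + 1), (-1 : ℤ) ^ (n - k) * n.choose k * k.choose i * (k + n).choose n =
        n.choose i * (n + i).choose n := by
    rw [Nat.choose_symm_add]
    simpa only [add_zero] using
      sum_range_neg_one_pow_mul_choose_mul_choose_mul_add_choose (mem_range_succ_iff.mp hi) n 0
  calc ∑ k ∈ range (n + 1), (-1 : ℤ) ^ (n + k) * n.choose k * ((n + k).choose n) ^ 2
      = ∑ k ∈ range (n + 1), ∑ i ∈ range (n + 1), (n.choose i : ℤ) *
          ((-1 : ℤ) ^ (n - k) * n.choose k * k.choose i * (k + n).choose n) := by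
        refine sum_congr rfl fun k hk => ?_
        rw [neg_one_pow_add_eq_neg_one_pow_sub (mem_range_succ_iff.mp hk), sq]
        nth_rw 2 [Nat.add_choose_left_eq_sum_choose_mul_choose]
        rw [add_comm k n, Nat.cast_sum, mul_sum, mul_sum]
        refine sum_congr rfl fun i _ => ?_
        push_cast
        ring
    _ = ∑ i ∈ range (n + 1), (n.choose i : ℤ) ^ 2 * (n + i).choose n := by
        rw [sum_comm]
        refine sum_congr rfl fun i hi => ?_
        rw [← mul_sum, inner i hi]
        ring
end

section
/- For every natural number n, ∑_{k=0}^{n} C(n,k)^2 C(n+k,n) C(2n+k,n) = C(2n,n)^3. -/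
/-!
Wilf–Zeilberger method: both sides satisfy `(n + 1)³ a(n + 1) = 8 (2n + 1)³ a(n)` and equal `1`
at `n = 0`. For `C(2n, n)³` this is the cube of `(n + 1) C(2n + 2, n + 1) = 2 (2n + 1) C(2n, n)`.
For the sum, with summand `F(n, k)`, Zeilberger's algorithm produces a certificate `G` with
`(n + 1)³ F(n + 1, k) - 8 (2n + 1)³ F(n, k) = G(n, k + 1) - G(n, k)` for `k ≤ n`, which telescopes
when summed over `k`; the extra term `F(n + 1, n + 1)` of the sum at `n + 1` cancels `G(n, n + 1)`.
-/

open Finset Nat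

theorem eq_of_mul_succ_eq {M : Type*} [MonoidWithZero M] [IsLeftCancelMulZero M] {c d S T : ℕ → M}
    (hc : ∀ n, c n ≠ 0) (hS : ∀ n, c n * S (n + 1) = d n * S n)
    (hT : ∀ n, c n * T (n + 1) = d n * T n) (h0 : S 0 = T 0) : S = T := by
  funext n
  induction n with
  | zero => exact h0
  | succ n ih => exact mul_left_cancel₀ (hc n) (by rw [hS, hT, ih])

theorem succ_pow_three_mul_centralBinom_succ_pow_three (n : ℕ) :
    (n + 1) ^ 3 * centralBinom (n + 1) ^ 3 = 8 * (2 * n + 1) ^ 3 * centralBinom n ^ 3 := by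
  rw [← mul_pow, succ_mul_centralBinom_succ]
  ring

namespace CubeCentralBinom

def summand (n k : ℕ) : ℕ :=
  n.choose k ^ 2 * (n + k).choose n * (2 * n + k).choose n

/-- `summand n k` for `k ≤ n`, in the variables `k` and `m = n - k`. -/
noncomputable def term (k m : ℕ) : ℚ :=
  (3 * k + 2 * m)! / ((k ! : ℚ) ^ 3 * (m ! : ℚ) ^ 2)

theorem cast_summand_add (k m : ℕ) : (summand (k + m) k : ℚ) = term k m := by
  have h₁ : ((k + m).choose k : ℚ) = (k + m)! / (k ! * m !) := cast_add_choose ℚ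
  have h₂ : ((k + m + k).choose (k + m) : ℚ) = (2 * k + m)! / ((k + m)! * k !) := by
    rw [cast_add_choose ℚ]; ring_nf
  have h₃ : ((2 * (k + m) + k).choose (k + m) : ℚ) =
      (3 * k + 2 * m)! / ((k + m)! * (2 * k + m)!) := by
    rw [show 2 * (k + m) + k = k + m + (2 * k + m) by ring, cast_add_choose ℚ]; ring_nf
  simp only [summand, term, cast_mul, cast_pow, h₁, h₂, h₃]
  field_simp

theorem term_succ_right (k m : ℕ) :
    term k (m + 1) * (m + 1) ^ 2 = (3 * k + 2 * m + 1) * (3 * k + 2 * m + 2) * term k m := by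
  simp only [term, show 3 * k + 2 * (m + 1) = 3 * k + 2 * m + 1 + 1 by ring, factorial_succ]
  push_cast
  field_simp
  ring

theorem term_succ_left (k m : ℕ) :
    term (k + 1) m * (k + 1) ^ 3 =
      (3 * k + 2 * m + 1) * (3 * k + 2 * m + 2) * (3 * k + 2 * m + 3) * term k m := by
  simp only [term, show 3 * (k + 1) + 2 * m = 3 * k + 2 * m + 2 + 1 by ring, factorial_succ]
  push_cast
  field_simp
  ring

def certPoly (n k : ℕ) : ℚ := (21 * n + 13) * k - (30 * n ^ 2 + 49 * n + 19)

/-- The WZ certificate `G(n, k) = k³ certPoly n k (2n + k)! / (k!³ (n + 1 - k)!²)`, written through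
`term` so that no truncated subtraction occurs for `k ≤ n + 1`. -/
noncomputable def cert (n : ℕ) : ℕ → ℚ
  | 0 => 0
  | j + 1 => certPoly n (j + 1) * (2 * n + j + 1) * term j (n - j)

theorem cert_mul_sq (j m : ℕ) :
    cert (j + m) j * (m + 1) ^ 2 = j ^ 3 * certPoly (j + m) j * term j m := by
  cases j with
  | zero => simp [cert]
  | succ i =>
    have hl := term_succ_left i m
    have hr := term_succ_right i m
    rw [cert, show i + 1 + m - i = m + 1 by omega]
    push_cast
    linear_combination certPoly (i + 1 + m) (i + 1) * ((3 * i + 2 * m + 3) * hr - hl)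

theorem wz_step (j m : ℕ) :
    ((j + m : ℕ) + 1 : ℚ) ^ 3 * summand (j + m + 1) j -
        8 * (2 * (j + m : ℕ) + 1) ^ 3 * summand (j + m) j =
      cert (j + m) (j + 1) - cert (j + m) j := by
  have hm : ((m : ℚ) + 1) ^ 2 ≠ 0 := by positivity
  have hr := term_succ_right j m
  have hc := cert_mul_sq j m
  rw [show j + m + 1 = j + (m + 1) by ring, cast_summand_add, cast_summand_add, cert,
    show j + m - j = m by omega]
  refine mul_right_cancel₀ hm ?_
  simp only [certPoly] at hc ⊢
  push_cast at hc ⊢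
  linear_combination ((j + m : ℚ) + 1) ^ 3 * hr + hc

theorem wz_boundary (n : ℕ) :
    ((n : ℚ) + 1) ^ 3 * summand (n + 1) (n + 1) = - cert n (n + 1) := by
  have hl := term_succ_left n 0
  rw [show n + 1 = n + 1 + 0 by rfl, cast_summand_add, cert, Nat.sub_self]
  simp only [certPoly]
  push_cast
  linear_combination hl

def binomSum (n : ℕ) : ℕ :=
  ∑ k ∈ range (n + 1), summand n k

theorem succ_pow_three_mul_binomSum_succ (n : ℕ) :
    (n + 1) ^ 3 * binomSum (n + 1) = 8 * (2 * n + 1) ^ 3 * binomSum n := by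
  have telescope : ∑ k ∈ range (n + 1),
      (((n : ℚ) + 1) ^ 3 * summand (n + 1) k - 8 * (2 * n + 1) ^ 3 * summand n k) =
        cert n (n + 1) - cert n 0 := by
    rw [← sum_range_sub]
    refine sum_congr rfl fun k hk => ?_
    obtain ⟨m, rfl⟩ := exists_add_of_le (mem_range_succ_iff.mp hk)
    exact_mod_cast wz_step k m
  rw [sum_sub_distrib, ← mul_sum, ← mul_sum, cert, sub_zero] at telescope
  have hb := wz_boundary n
  suffices ((n : ℚ) + 1) ^ 3 * binomSum (n + 1) = 8 * (2 * n + 1) ^ 3 * binomSum n by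
    exact_mod_cast this
  rw [binomSum, binomSum, sum_range_succ]
  push_cast
  linarith

end CubeCentralBinom

open CubeCentralBinom in
theorem stmt_3 (n : ℕ) :
    ∑ k ∈ Finset.range (n + 1),
        (n.choose k) ^ 2 * ((n + k).choose n) * ((2 * n + k).choose n) =
      ((2 * n).choose n) ^ 3 := by
  have h := eq_of_mul_succ_eq (S := binomSum) (T := fun n => centralBinom n ^ 3)
    (fun n => by positivity) succ_pow_three_mul_binomSum_succ
    succ_pow_three_mul_centralBinom_succ_pow_three rfl
  exact congrFun h n
end

section
/- For every natural number n, ((3n)! / (n!)^3) * ∑_{k=0}^{n} C(n,k)^3 = ∑_{k=0}^{n} C(n,k)^2 C(n+k,k) C(2n-k,n) C(3n,n+k). -/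
/-!
Both sides agree term by term: for `k ≤ n`, the products
`(3n)!/(n!)^3 · C(n,k)` and `C(n+k,k) · C(2n-k,n) · C(3n,n+k)` are both the multinomial
coefficient `(3n)! / (n! · k! · (n-k)! · n!)`, as one sees by multiplying each of them by
`n! · k! · (n-k)! · n!`.
-/

open Nat

namespace Nat

theorem add_choose_mul_add_choose_mul_add_choose_mul_factorial (a b c d : ℕ) :
    (a + b).choose b * (c + d).choose d * (a + b + (c + d)).choose (c + d) *
        (a ! * b ! * c ! * d !) = (a + b + (c + d))! := by
  rw [← add_choose_mul_factorial_mul_factorial (a + b) (c + d),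
    ← add_choose_mul_factorial_mul_factorial a b, ← add_choose_mul_factorial_mul_factorial c d]
  ring

theorem factorial_pow_three_dvd_factorial_three_mul (n : ℕ) : n ! ^ 3 ∣ (3 * n)! :=
  calc n ! ^ 3 = n ! * (n ! * n !) := by ring
    _ ∣ n ! * (n + n)! := mul_dvd_mul_left _ (factorial_mul_factorial_dvd_factorial_add n n)
    _ ∣ (3 * n)! := by
      rw [show 3 * n = n + (n + n) by ring]; exact factorial_mul_factorial_dvd_factorial_add _ _

theorem factorial_three_mul_div_mul_choose {n k : ℕ} (hk : k ≤ n) :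
    (3 * n)! / n ! ^ 3 * n.choose k =
      (n + k).choose k * (2 * n - k).choose n * (3 * n).choose (n + k) := by
  have hpos : 0 < n ! * k ! * (n - k)! * n ! := by positivity
  refine Nat.eq_of_mul_eq_mul_right hpos ?_
  calc (3 * n)! / n ! ^ 3 * n.choose k * (n ! * k ! * (n - k)! * n !)
      = (3 * n)! / n ! ^ 3 * n ! ^ 3 := by
        rw [← choose_mul_factorial_mul_factorial hk]; ring
    _ = (3 * n)! := Nat.div_mul_cancel (factorial_pow_three_dvd_factorial_three_mul n)
    _ = (n + k).choose k * (2 * n - k).choose n * (3 * n).choose (n + k) *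
          (n ! * k ! * (n - k)! * n !) := by
        have h := add_choose_mul_add_choose_mul_add_choose_mul_factorial n k (n - k) n
        rw [show n - k + n = 2 * n - k by omega, show n + k + (2 * n - k) = 3 * n by omega,
          ← choose_symm_of_eq_add (show 3 * n = (n + k) + (2 * n - k) by omega)] at h
        rw [← h]

end Nat

theorem stmt_4 (n : ℕ) :
    ((3 * n).factorial / (n.factorial) ^ 3) *
        ∑ k ∈ Finset.range (n + 1), (n.choose k) ^ 3 =
      ∑ k ∈ Finset.range (n + 1),
        (n.choose k) ^ 2 * ((n + k).choose k) * ((2 * n - k).choose n) *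
          ((3 * n).choose (n + k)) := by
  rw [Finset.mul_sum]
  refine Finset.sum_congr rfl fun k hk => ?_
  calc (3 * n)! / n ! ^ 3 * n.choose k ^ 3
      = n.choose k ^ 2 * ((3 * n)! / n ! ^ 3 * n.choose k) := by ring
    _ = _ := by
      rw [factorial_three_mul_div_mul_choose (Nat.lt_succ_iff.mp (Finset.mem_range.mp hk))]
      ring
end

section
/- For every natural number n, ((3n)! / (n!)^3) * ∑_{k=0}^{n} C(n,k)^3 = C(3n,n) * ∑_{k=0}^{n} C(n,k) C(n+k,n) C(2n-2k,n) C(2n,n+k). -/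
/-!
Since `(3n)!/(n!)^3 = C(3n,n) C(2n,n)` and `C(2n,n+k) C(n+k,n) = C(2n,n) C(n,k)`, both sides
carry the factor `C(3n,n) C(2n,n)`, and after the reflection `k ↦ n - k` the claim becomes
`∑ C(n,k)^3 = ∑ C(n,k)^2 C(2k,n)`. To see this, expand `C(2k,n) = ∑_j C(k,j) C(k,n-j)` by
Vandermonde and swap the sums; for fixed `j` the inner sum collapses, by trinomial revision and
Vandermonde once more, to `C(n,j)^3`.
-/

open Finset Nat

theorem factorial_three_mul_div_factorial_pow_three (n : ℕ) :
    (3 * n)! / n ! ^ 3 = (3 * n).choose n * (2 * n).choose n := by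
  have h3 : (3 * n)! = (3 * n).choose n * (2 * n)! * n ! := by
    rw [show 3 * n = 2 * n + n by ring, add_choose_mul_factorial_mul_factorial]
  have h2 : (2 * n)! = (2 * n).choose n * n ! * n ! := by
    rw [two_mul, add_choose_mul_factorial_mul_factorial]
  rw [h3, h2, show (3 * n).choose n * ((2 * n).choose n * n ! * n !) * n !
    = (3 * n).choose n * (2 * n).choose n * n ! ^ 3 by ring]
  exact Nat.mul_div_cancel _ (by positivity)

theorem choose_add_mul_choose_left {n j m : ℕ} (h : j + m = n) (s : ℕ) :
    n.choose (j + s) * (j + s).choose j = n.choose j * m.choose s := by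
  rw [choose_mul (le_add_right j s), add_tsub_cancel_left, ← h, add_tsub_cancel_left]

theorem choose_add_mul_choose_right {n j m s : ℕ} (h : j + m = n) (hs : s ≤ m) :
    n.choose (j + s) * (j + s).choose m = n.choose j * j.choose (m - s) := by
  rcases le_or_gt m (j + s) with hm | hm
  · rw [choose_mul hm, choose_symm_of_eq_add h.symm, show n - m = j by omega,
      ← choose_symm (show m - s ≤ j by omega), show j - (m - s) = j + s - m by omega]
  · rw [choose_eq_zero_of_lt hm, choose_eq_zero_of_lt (show j < m - s by omega), mul_zero,
      mul_zero]

theorem sum_choose_sq_mul_choose_mul_choose {n j m : ℕ} (h : j + m = n) :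
    ∑ k ∈ range (n + 1), n.choose k ^ 2 * k.choose j * k.choose m = n.choose j ^ 3 := by
  have hsplit : n + 1 = j + (m + 1) := by omega
  have hlow : ∑ k ∈ range j, n.choose k ^ 2 * k.choose j * k.choose m = 0 :=
    sum_eq_zero fun k hk => by rw [choose_eq_zero_of_lt (mem_range.1 hk)]; ring
  have hterm : ∀ s ∈ range (m + 1), n.choose (j + s) ^ 2 * (j + s).choose j * (j + s).choose m
      = n.choose j ^ 2 * (m.choose s * j.choose (m - s)) := fun s hs => calc
    _ = n.choose (j + s) * (j + s).choose j * (n.choose (j + s) * (j + s).choose m) := by ring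
    _ = n.choose j * m.choose s * (n.choose j * j.choose (m - s)) := by
      rw [choose_add_mul_choose_left h, choose_add_mul_choose_right h (mem_range_succ_iff.1 hs)]
    _ = _ := by ring
  have hvandermonde : ∑ s ∈ range (m + 1), m.choose s * j.choose (m - s) = n.choose j := by
    rw [← sum_antidiagonal_eq_sum_range_succ (fun a b => m.choose a * j.choose b),
      ← add_choose_eq, add_comm, h, choose_symm_of_eq_add h.symm]
  rw [hsplit, sum_range_add, hlow, zero_add, sum_congr rfl hterm, ← mul_sum, hvandermonde]
  ring

theorem sum_choose_sq_mul_choose_two_mul (n : ℕ) :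
    ∑ k ∈ range (n + 1), n.choose k ^ 2 * (2 * k).choose n
      = ∑ k ∈ range (n + 1), n.choose k ^ 3 := by
  have hexpand : ∀ k, (2 * k).choose n = ∑ j ∈ range (n + 1), k.choose j * k.choose (n - j) :=
    fun k => by
      rw [two_mul, add_choose_eq,
        sum_antidiagonal_eq_sum_range_succ (fun a b => k.choose a * k.choose b)]
  calc ∑ k ∈ range (n + 1), n.choose k ^ 2 * (2 * k).choose n
      = ∑ k ∈ range (n + 1), ∑ j ∈ range (n + 1),
          n.choose k ^ 2 * k.choose j * k.choose (n - j) := by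
        simp only [hexpand, mul_sum, mul_assoc]
    _ = ∑ j ∈ range (n + 1), ∑ k ∈ range (n + 1),
          n.choose k ^ 2 * k.choose j * k.choose (n - j) := sum_comm
    _ = ∑ j ∈ range (n + 1), n.choose j ^ 3 := sum_congr rfl fun j hj =>
        sum_choose_sq_mul_choose_mul_choose (add_tsub_cancel_of_le (mem_range_succ_iff.1 hj))

theorem sum_choose_sq_mul_choose_two_mul_sub (n : ℕ) :
    ∑ k ∈ range (n + 1), n.choose k ^ 2 * (2 * n - 2 * k).choose n
      = ∑ k ∈ range (n + 1), n.choose k ^ 2 * (2 * k).choose n := by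
  rw [← sum_range_reflect]
  refine sum_congr rfl fun k hk => ?_
  have hk : k ≤ n := mem_range_succ_iff.1 hk
  rw [add_tsub_cancel_right, choose_symm hk, show 2 * n - 2 * (n - k) = 2 * k by omega]

theorem choose_mul_choose_add_mul_choose_two_mul (n k : ℕ) :
    n.choose k * (n + k).choose n * (2 * n).choose (n + k)
      = (2 * n).choose n * n.choose k ^ 2 := by
  have h := choose_add_mul_choose_left (two_mul n).symm k
  rw [sq, ← mul_assoc, ← h]
  ring

theorem stmt_5 (n : ℕ) :
    ((3 * n).factorial / (n.factorial) ^ 3) *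
        ∑ k ∈ Finset.range (n + 1), (n.choose k) ^ 3 =
      ((3 * n).choose n) *
        ∑ k ∈ Finset.range (n + 1),
          (n.choose k) * ((n + k).choose n) * ((2 * n - 2 * k).choose n) *
            ((2 * n).choose (n + k)) := by
  have hterm : ∀ k ∈ range (n + 1),
      n.choose k * (n + k).choose n * (2 * n - 2 * k).choose n * (2 * n).choose (n + k)
        = (2 * n).choose n * (n.choose k ^ 2 * (2 * n - 2 * k).choose n) := fun k hk => by
    rw [← mul_assoc, ← choose_mul_choose_add_mul_choose_two_mul]
    ring
  rw [factorial_three_mul_div_factorial_pow_three, sum_congr rfl hterm, ← mul_sum,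
    sum_choose_sq_mul_choose_two_mul_sub, sum_choose_sq_mul_choose_two_mul]
  ring
end

section
/- For every natural number n, C(2n,n) * ∑_{k=0}^{n} C(n,k)^2 C(2k,k) C(2n-2k,n-k) = ∑_{k=0}^{n} C(2n,2k) C(2k,k)^2 C(2n-2k,n-k)^2. -/
open Nat

/-- Both sides equal `(2 (a + b))! / (a! b!)²`. -/
theorem Nat.choose_two_mul_mul_choose_sq (a b : ℕ) :
    (2 * (a + b)).choose (a + b) * ((a + b).choose a) ^ 2 =
      (2 * (a + b)).choose (2 * a) * (2 * a).choose a * (2 * b).choose b := by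
  have central (m : ℕ) : (2 * m).choose m * m ! * m ! = (2 * m)! := by
    rw [two_mul]; exact add_choose_mul_factorial_mul_factorial m m
  have split : (2 * (a + b)).choose (2 * a) * (2 * a)! * (2 * b)! = (2 * (a + b))! := by
    rw [mul_add, choose_symm_add]; exact add_choose_mul_factorial_mul_factorial _ _
  apply Nat.eq_of_mul_eq_mul_right (by positivity : 0 < (a ! * b !) ^ 2)
  calc _ = (2 * (a + b)).choose (a + b) * ((a + b).choose b * a ! * b !) ^ 2 := by
        rw [choose_symm_add]; ring
    _ = (2 * (a + b))! := by rw [add_choose_mul_factorial_mul_factorial, ← central]; ring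
    _ = (2 * (a + b)).choose (2 * a) * ((2 * a).choose a * a ! * a !) *
          ((2 * b).choose b * b ! * b !) := by rw [central, central, split]
    _ = _ := by ring

theorem stmt_6 (n : ℕ) :
    ((2 * n).choose n) *
        ∑ k ∈ Finset.range (n + 1),
          (n.choose k) ^ 2 * ((2 * k).choose k) * ((2 * n - 2 * k).choose (n - k)) =
      ∑ k ∈ Finset.range (n + 1),
        ((2 * n).choose (2 * k)) * ((2 * k).choose k) ^ 2 *
          ((2 * n - 2 * k).choose (n - k)) ^ 2 := by
  rw [Finset.mul_sum]
  refine Finset.sum_congr rfl fun k hk => ?_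
  obtain ⟨j, rfl⟩ := Nat.exists_eq_add_of_le (Finset.mem_range_succ_iff.mp hk)
  rw [show 2 * (k + j) - 2 * k = 2 * j by omega, Nat.add_sub_cancel_left]
  calc _ = (2 * (k + j)).choose (k + j) * ((k + j).choose k) ^ 2 *
          ((2 * k).choose k * (2 * j).choose j) := by ring
    _ = _ := by rw [Nat.choose_two_mul_mul_choose_sq]; ring
end

section
/- For every natural number n, ∑_{k=0}^{n} C(n,k)^4 = ∑_{k=0}^{n} C(2k,k) C(2n-2k,n-k) C(k,n-k) C(2n-k,k). -/
/-!
Write `C(a, b)` for `a.choose b`. For `k ≤ n` the trinomial revision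
`C(N, b) C(b, c) = C(N, c) C(N - c, b - c)` turns the right-hand summand into
`C(n, k)² C(2k, n) C(2n - k, n)`, and Vandermonde expands `C(2k, n)` as `∑ⱼ C(k, j) C(k, n - j)`.
After exchanging the sums it remains to show, for each `j ≤ n`,
`∑ₖ C(n, k)² C(k, j) C(k, n - j) C(2n - k, n) = C(n, j)⁴`. Substituting `k = n - t` and using the
trinomial revision twice reduces this to `∑ₜ C(j, t) C(m, t) C(m + j + t, t) = C(m + j, j)²` with
`m = n - j`, which follows from one more Vandermonde expansion of `C(m + j + t, t)` and two more
Vandermonde sums.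
-/

open Finset

namespace Nat

theorem choose_mul_choose_sub_comm_s7 (N p q : ℕ) :
    N.choose p * (N - p).choose q = N.choose q * (N - q).choose p := by
  have hp := choose_mul (n := N) (Nat.le_add_right p q)
  have hq := choose_mul (n := N) (Nat.le_add_right q p)
  rw [Nat.add_sub_cancel_left] at hp hq
  rw [← hp, ← hq, Nat.add_comm q p, choose_symm_add]

theorem add_choose_eq_sum_range (x y s : ℕ) :
    (x + y).choose s = ∑ i ∈ range (s + 1), x.choose i * y.choose (s - i) := by
  rw [add_choose_eq,
    Finset.Nat.sum_antidiagonal_eq_sum_range_succ (fun a b ↦ x.choose a * y.choose b)]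

theorem sum_range_choose_mul_choose_of_le (m : ℕ) {j N : ℕ} (hjN : j ≤ N) :
    ∑ a ∈ range (N + 1), m.choose a * j.choose a = (m + j).choose j := by
  have hvanish : ∀ a ∈ range (N + 1), a ∉ range (j + 1) → m.choose a * j.choose a = 0 := by
    intro a _ ha
    rw [choose_eq_zero_of_lt (n := j) (by simpa using ha), Nat.mul_zero]
  rw [← sum_subset (range_subset_range.2 (by omega)) hvanish, add_choose_eq_sum_range]
  refine sum_congr rfl fun a ha ↦ ?_
  rw [choose_symm (mem_range_succ_iff.1 ha)]

theorem sum_range_choose_mul_choose_add (u m a : ℕ) :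
    ∑ s ∈ range (u + 1), u.choose s * m.choose (a + s) = (u + m).choose (a + u) := by
  have hlow : ∑ i ∈ range a, m.choose i * u.choose (a + u - i) = 0 :=
    sum_eq_zero fun i hi ↦ by
      rw [choose_eq_zero_of_lt (by simp at hi; omega : u < a + u - i), Nat.mul_zero]
  rw [Nat.add_comm u m, add_choose_eq_sum_range, show a + u + 1 = a + (u + 1) by omega,
    sum_range_add _ a, hlow, Nat.zero_add]
  refine sum_congr rfl fun s hs ↦ ?_
  rw [show a + u - (a + s) = u - s by omega, choose_symm (mem_range_succ_iff.1 hs), Nat.mul_comm]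

theorem sum_range_choose_mul_choose_mul_choose (a u m : ℕ) :
    ∑ t ∈ range (a + u + 1), (a + u).choose t * m.choose t * t.choose a =
      (a + u).choose a * (u + m).choose (a + u) := by
  rw [show a + u + 1 = a + (u + 1) by omega, sum_range_add _ a,
    sum_eq_zero fun t ht ↦ by rw [choose_eq_zero_of_lt (mem_range.1 ht), Nat.mul_zero],
    Nat.zero_add, ← sum_range_choose_mul_choose_add u m a, mul_sum]
  refine sum_congr rfl fun s _ ↦ ?_
  have h := choose_mul (n := a + u) (k := a + s) (Nat.le_add_right a s)
  rw [Nat.add_sub_cancel_left, Nat.add_sub_cancel_left] at h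
  rw [Nat.mul_right_comm, h, Nat.mul_assoc]

theorem sum_range_choose_mul_choose_mul_add_choose (j m : ℕ) :
    ∑ t ∈ range (j + 1), j.choose t * m.choose t * (m + j + t).choose t =
      (m + j).choose j ^ 2 := by
  have hexpand : ∀ t ∈ range (j + 1), j.choose t * m.choose t * (m + j + t).choose t =
      ∑ a ∈ range (j + 1), (m + j).choose a * (j.choose t * m.choose t * t.choose a) := by
    intro t ht
    rw [← sum_range_choose_mul_choose_of_le (m + j) (mem_range_succ_iff.1 ht), mul_sum]
    exact sum_congr rfl fun a _ ↦ by ring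
  have hinner : ∀ a ∈ range (j + 1),
      ∑ t ∈ range (j + 1), (m + j).choose a * (j.choose t * m.choose t * t.choose a) =
        (m + j).choose j * (m.choose a * j.choose a) := by
    intro a ha
    obtain ⟨u, rfl⟩ := Nat.exists_eq_add_of_le (mem_range_succ_iff.1 ha)
    have hswap := choose_mul_choose_sub_comm_s7 (m + (a + u)) a (a + u)
    rw [show m + (a + u) - a = u + m by omega, Nat.add_sub_cancel] at hswap
    rw [← mul_sum, sum_range_choose_mul_choose_mul_choose, ← Nat.mul_assoc, Nat.mul_right_comm,
      hswap]
    ring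
  rw [sum_congr rfl hexpand, sum_comm, sum_congr rfl hinner, ← mul_sum,
    sum_range_choose_mul_choose_of_le m le_rfl, sq]

theorem sum_range_choose_sq_mul_choose_mul_choose (n : ℕ) {j : ℕ} (hj : j ≤ n) :
    ∑ k ∈ range (n + 1), n.choose k ^ 2 * k.choose j * k.choose (n - j) * (2 * n - k).choose n =
      n.choose j ^ 4 := by
  have hterm : ∀ t ∈ range (n + 1),
      n.choose (n - t) ^ 2 * (n - t).choose j * (n - t).choose (n - j) *
          (2 * n - (n - t)).choose n =
        n.choose j ^ 2 * (j.choose t * (n - j).choose t * (n - j + j + t).choose t) := by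
    intro t ht
    have ht : t ≤ n := mem_range_succ_iff.1 ht
    have hj' := choose_mul_choose_sub_comm_s7 n t j
    have hnj := choose_mul_choose_sub_comm_s7 n t (n - j)
    rw [Nat.sub_sub_self hj, choose_symm hj] at hnj
    have hsymm : (n - j + j + t).choose n = (n - j + j + t).choose t := by
      rw [Nat.sub_add_cancel hj, choose_symm_add]
    rw [choose_symm ht, show 2 * n - (n - t) = n - j + j + t by omega, hsymm]
    calc n.choose t ^ 2 * (n - t).choose j * (n - t).choose (n - j) * (n - j + j + t).choose t
        = (n.choose t * (n - t).choose j) * (n.choose t * (n - t).choose (n - j)) *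
            (n - j + j + t).choose t := by ring
      _ = _ := by rw [hj', hnj]; ring
  rw [← sum_range_reflect, Nat.add_sub_cancel, sum_congr rfl hterm,
    ← mul_sum, ← sum_subset (range_subset_range.2 (Nat.succ_le_succ hj)) fun t _ ht ↦ by
      rw [choose_eq_zero_of_lt (by simpa using ht), Nat.zero_mul, Nat.zero_mul],
    sum_range_choose_mul_choose_mul_add_choose, Nat.sub_add_cancel hj]
  ring

theorem choose_two_mul_mul_choose_eq {n k : ℕ} (hk : k ≤ n) :
    (2 * k).choose k * (2 * n - 2 * k).choose (n - k) * k.choose (n - k) * (2 * n - k).choose k =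
      n.choose k ^ 2 * (2 * k).choose n * (2 * n - k).choose n := by
  have h₁ := choose_mul (n := 2 * k) hk
  have h₂ := choose_mul (n := 2 * n - k) hk
  rw [show 2 * k - k = k by omega] at h₁
  rw [show 2 * n - k - k = 2 * n - 2 * k by omega] at h₂
  calc _ = ((2 * k).choose k * k.choose (n - k)) *
          ((2 * n - k).choose k * (2 * n - 2 * k).choose (n - k)) := by ring
    _ = _ := by rw [← h₁, ← h₂]; ring

end Nat

theorem stmt_7 (n : ℕ) :
    ∑ k ∈ Finset.range (n + 1), (n.choose k) ^ 4 =
      ∑ k ∈ Finset.range (n + 1),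
        ((2 * k).choose k) * ((2 * n - 2 * k).choose (n - k)) * (k.choose (n - k)) *
          ((2 * n - k).choose k) := by
  calc ∑ j ∈ range (n + 1), n.choose j ^ 4
      = ∑ j ∈ range (n + 1), ∑ k ∈ range (n + 1),
          n.choose k ^ 2 * k.choose j * k.choose (n - j) * (2 * n - k).choose n :=
        sum_congr rfl fun j hj ↦
          (Nat.sum_range_choose_sq_mul_choose_mul_choose n (mem_range_succ_iff.1 hj)).symm
    _ = ∑ k ∈ range (n + 1), n.choose k ^ 2 * (2 * k).choose n * (2 * n - k).choose n := by
        rw [sum_comm]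
        refine sum_congr rfl fun k _ ↦ ?_
        rw [two_mul k, Nat.add_choose_eq_sum_range, mul_sum, sum_mul]
        exact sum_congr rfl fun j _ ↦ by ring
    _ = _ := sum_congr rfl fun k hk ↦
        (Nat.choose_two_mul_mul_choose_eq (mem_range_succ_iff.1 hk)).symm
end

section
/- For every natural number n, ∑_{k=0}^{n} C(n,k)^4 = ∑_{k=0}^{n} (-1)^{n+k} C(n,k) C(n+k,n) C(2k,k) C(2n-2k,n-k), as integers. -/
/-!
Creative telescoping. Both summands `F n k` are hypergeometric in `n` and `k`, and Zeilberger's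
algorithm produces, for each of them, a rational function `R` such that
`(n+2)³ F(n+2,k) - 2(2n+3)(3n²+9n+7) F(n+1,k) - 4(n+1)(4n+3)(4n+5) F(n,k) = G(n,k+1) - G(n,k)`
with `G(n,k) = R(n,k) F(n+2,k)`. Dividing by `F(n+2,k)` turns this into an identity of rational
functions. Summing over `k` telescopes, so both sides of the identity satisfy the same second-order
recurrence with nonvanishing leading coefficient, and they agree for `n = 0, 1`.
-/

open Finset

namespace Nat

variable {R : Type*} [CommRing R]

theorem cast_choose_mul_succ_eq (n k : ℕ) :
    (n.choose k : R) * (n + 1) = ((n + 1).choose k : R) * (n + 1 - k) := by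
  rcases le_or_gt k (n + 1) with h | h
  · have e := congrArg (Nat.cast : ℕ → R) (choose_mul_succ_eq n k)
    push_cast [Nat.cast_sub h] at e
    exact e
  · simp [choose_eq_zero_of_lt h, choose_eq_zero_of_lt (by omega : n < k)]

theorem cast_choose_succ_right_eq (n k : ℕ) :
    (n.choose (k + 1) : R) * (k + 1) = (n.choose k : R) * (n - k) := by
  rcases le_or_gt k n with h | h
  · have e := congrArg (Nat.cast : ℕ → R) (choose_succ_right_eq n k)
    push_cast [Nat.cast_sub h] at e
    exact e
  · simp [choose_eq_zero_of_lt h, choose_eq_zero_of_lt (by omega : n < k + 1)]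

theorem cast_choose_mul_succ_eq_succ_succ (n k : ℕ) :
    (n.choose k : R) * (n + 1) = ((n + 1).choose (k + 1) : R) * (k + 1) := by
  have h := add_one_mul_choose_eq n k
  rw [mul_comm (n + 1)] at h
  exact_mod_cast congrArg (Nat.cast : ℕ → R) h

theorem cast_choose_two_mul_mul_eq (n : ℕ) :
    ((2 * n).choose n : R) * (2 * (2 * n + 1)) = ((2 * n + 2).choose (n + 1) : R) * (n + 1) := by
  have h := succ_mul_centralBinom_succ n
  rw [centralBinom, centralBinom] at h
  have e := congrArg (Nat.cast : ℕ → R) h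
  push_cast at e
  linear_combination -e

end Nat

theorem two_mul_add_one_sub_two_mul_ne_zero {K : Type*} [Ring K] [CharZero K] (a b : ℕ) :
    (2 * a + 1 - 2 * b : K) ≠ 0 := by
  have h : ((2 * a + 1 - 2 * b : ℤ) : K) ≠ 0 := Int.cast_ne_zero.2 (by omega)
  exact_mod_cast h

section Recurrence

variable {K : Type*}

def rowSum [AddCommMonoid K] (F : ℕ → ℕ → K) (n : ℕ) : K :=
  ∑ k ∈ range (n + 1), F n k

theorem rowSum_eq_sum_range_add [AddCommMonoid K] {F : ℕ → ℕ → K}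
    (hF : ∀ n k, n < k → F n k = 0) (n m : ℕ) :
    rowSum F n = ∑ k ∈ range (n + 1 + m), F n k :=
  sum_subset (range_subset_range.2 (by omega)) fun k hk hk' => hF n k (by simp at hk hk'; omega)

theorem rowSum_recurrence_of_telescoping [Ring K] {F G : ℕ → ℕ → K} {a b c : ℕ → K}
    (hF : ∀ n k, n < k → F n k = 0) (n : ℕ) (hG₀ : G n 0 = 0) (hG : G n (n + 3) = 0)
    (h : ∀ k, a n * F (n + 2) k - b n * F (n + 1) k - c n * F n k = G n (k + 1) - G n k) :
    a n * rowSum F (n + 2) = b n * rowSum F (n + 1) + c n * rowSum F n := by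
  have htel := sum_range_sub (G n) (n + 3)
  rw [hG₀, hG, sub_zero, ← sum_congr rfl fun k _ => h k, sum_sub_distrib, sum_sub_distrib,
    ← mul_sum, ← mul_sum, ← mul_sum, sub_sub, sub_eq_zero] at htel
  rwa [rowSum_eq_sum_range_add hF (n + 2) 0, rowSum_eq_sum_range_add hF (n + 1) 1,
    rowSum_eq_sum_range_add hF n 2]

theorem eq_of_recurrence [Ring K] [NoZeroDivisors K] {u v : ℕ → K} {a b c : ℕ → K}
    (ha : ∀ n, a n ≠ 0)
    (hu : ∀ n, a n * u (n + 2) = b n * u (n + 1) + c n * u n)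
    (hv : ∀ n, a n * v (n + 2) = b n * v (n + 1) + c n * v n)
    (h₀ : u 0 = v 0) (h₁ : u 1 = v 1) : u = v := by
  funext n
  induction n using Nat.twoStepInduction with
  | zero => exact h₀
  | one => exact h₁
  | more n ih ih' => exact mul_left_cancel₀ (ha n) (by rw [hu, hv, ih, ih'])

end Recurrence

namespace ChooseFourthPowerSum

def fourthPowerTerm (n k : ℕ) : ℚ := (n.choose k : ℚ) ^ 4

def alternatingTerm (n k : ℕ) : ℚ :=
  (-1) ^ (n + k) * n.choose k * (n + k).choose n * (2 * k).choose k *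
    (2 * n - 2 * k).choose (n - k)

theorem fourthPowerTerm_of_lt {n k : ℕ} (h : n < k) : fourthPowerTerm n k = 0 := by
  simp [fourthPowerTerm, Nat.choose_eq_zero_of_lt h]

theorem alternatingTerm_of_lt {n k : ℕ} (h : n < k) : alternatingTerm n k = 0 := by
  simp [alternatingTerm, Nat.choose_eq_zero_of_lt h]

theorem fourthPowerTerm_eq_succ_left (n k : ℕ) :
    fourthPowerTerm n k = fourthPowerTerm (n + 1) k * ((n + 1 - k) / (n + 1)) ^ 4 := by
  rw [fourthPowerTerm, fourthPowerTerm,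
    eq_div_of_mul_eq (by positivity) (Nat.cast_choose_mul_succ_eq (R := ℚ) n k)]
  ring

theorem fourthPowerTerm_succ_right (n k : ℕ) :
    fourthPowerTerm n (k + 1) = fourthPowerTerm n k * ((n - k) / (k + 1)) ^ 4 := by
  rw [fourthPowerTerm, fourthPowerTerm,
    eq_div_of_mul_eq (by positivity) (Nat.cast_choose_succ_right_eq (R := ℚ) n k)]
  ring

theorem alternatingTerm_eq_succ_left (n k : ℕ) :
    alternatingTerm n k =
      -alternatingTerm (n + 1) k * ((n + 1 - k) ^ 2 / (2 * (n + k + 1) * (2 * n + 1 - 2 * k))) := by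
  rcases le_or_gt k n with h | h
  · simp only [alternatingTerm]
    rw [add_right_comm n 1 k, pow_succ (-1 : ℚ) (n + k)]
    obtain ⟨j, rfl⟩ := Nat.exists_eq_add_of_le h
    rw [show 2 * (k + j) - 2 * k = 2 * j by omega, show k + j - k = j by omega,
      show 2 * (k + j + 1) - 2 * k = 2 * j + 2 by omega, show k + j + 1 - k = j + 1 by omega,
      eq_div_of_mul_eq (by positivity) (Nat.cast_choose_mul_succ_eq (R := ℚ) (k + j) k),
      eq_div_of_mul_eq (by positivity)
        (Nat.cast_choose_mul_succ_eq_succ_succ (R := ℚ) (k + j + k) (k + j)),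
      eq_div_of_mul_eq (by positivity) (Nat.cast_choose_two_mul_mul_eq (R := ℚ) j),
      show (2 * ((k + j : ℕ) : ℚ) + 1 - 2 * k) = 2 * j + 1 by push_cast; ring]
    push_cast
    field_simp
    ring
  · rw [alternatingTerm_of_lt h]
    rcases Nat.lt_or_ge (n + 1) k with h' | h'
    · rw [alternatingTerm_of_lt h']
      ring
    · obtain rfl : k = n + 1 := by omega
      push_cast
      ring

theorem alternatingTerm_succ_right (n k : ℕ) :
    alternatingTerm n (k + 1) = -alternatingTerm n k *
      ((n - k) ^ 2 * (n + k + 1) * (2 * k + 1) / ((k + 1) ^ 3 * (2 * n - 2 * k - 1))) := by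
  rcases lt_or_ge k n with h | h
  · simp only [alternatingTerm]
    rw [← add_assoc n k 1, pow_succ (-1 : ℚ) (n + k)]
    obtain ⟨j, rfl⟩ : ∃ j, n = k + j + 1 := ⟨n - k - 1, by omega⟩
    have e := Nat.cast_choose_mul_succ_eq (R := ℚ) (k + j + 1 + k) (k + j + 1)
    rw [show ((k + j + 1 + k : ℕ) : ℚ) + 1 - (k + j + 1 : ℕ) = k + 1 by push_cast; ring] at e
    rw [show 2 * (k + j + 1) - 2 * (k + 1) = 2 * j by omega, show k + j + 1 - (k + 1) = j by omega,
      show 2 * (k + j + 1) - 2 * k = 2 * j + 2 by omega, show k + j + 1 - k = j + 1 by omega,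
      show 2 * (k + 1) = 2 * k + 2 by omega,
      eq_div_of_mul_eq (by positivity) (Nat.cast_choose_succ_right_eq (R := ℚ) (k + j + 1) k),
      eq_div_of_mul_eq (by positivity) e.symm,
      eq_div_of_mul_eq (by positivity) (Nat.cast_choose_two_mul_mul_eq (R := ℚ) k).symm,
      eq_div_of_mul_eq (by positivity) (Nat.cast_choose_two_mul_mul_eq (R := ℚ) j),
      show (2 * ((k + j + 1 : ℕ) : ℚ) - 2 * k - 1) = 2 * j + 1 by push_cast; ring]
    push_cast
    field_simp
    ring
  · rw [alternatingTerm_of_lt (by omega : n < k + 1)]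
    rcases Nat.lt_or_ge n k with h' | h'
    · rw [alternatingTerm_of_lt h']
      ring
    · obtain rfl : k = n := by omega
      ring

def coeff₂ (n : ℕ) : ℚ := (n + 2) ^ 3

def coeff₁ (n : ℕ) : ℚ := 2 * (2 * n + 3) * (3 * n ^ 2 + 9 * n + 7)

def coeff₀ (n : ℕ) : ℚ := 4 * (n + 1) * (4 * n + 3) * (4 * n + 5)

theorem coeff₂_ne_zero (n : ℕ) : coeff₂ n ≠ 0 := by
  rw [coeff₂]
  positivity

def fourthPowerCert (n k : ℕ) : ℚ :=
  (k : ℚ) ^ 4 / ((n + 1) * (n + 2)) ^ 4 * fourthPowerTerm (n + 2) k *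
    ((-1080 + 2256 * k - 1980 * k ^ 2 + 900 * k ^ 3 - 210 * k ^ 4 + 20 * k ^ 5)
      + n * (-5380 + 9776 * k - 7302 * k ^ 2 + 2744 * k ^ 3 - 508 * k ^ 4 + 36 * k ^ 5)
      + n ^ 2 * (-11330 + 17412 * k - 10620 * k ^ 2 + 3088 * k ^ 3 - 402 * k ^ 4 + 16 * k ^ 5)
      + n ^ 3 * (-13075 + 16312 * k - 7612 * k ^ 2 + 1520 * k ^ 3 - 104 * k ^ 4)
      + n ^ 4 * (-8930 + 8476 * k - 2688 * k ^ 2 + 276 * k ^ 3)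
      + n ^ 5 * (-3610 + 2316 * k - 374 * k ^ 2)
      + n ^ 6 * (-800 + 260 * k)
      + n ^ 7 * (-75))

def alternatingCert (n k : ℕ) : ℚ :=
  (k : ℚ) ^ 3 / (4 * (n + k + 1) * (n + k + 2) * (2 * n + 1 - 2 * k) * (2 * n + 3 - 2 * k)) *
    alternatingTerm (n + 2) k *
    ((-328 + 980 * k - 716 * k ^ 2 + 136 * k ^ 3)
      + n * (-1276 + 2296 * k - 1000 * k ^ 2 + 96 * k ^ 3)
      + n ^ 2 * (-1628 + 1720 * k - 352 * k ^ 2)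
      + n ^ 3 * (-856 + 416 * k)
      + n ^ 4 * (-160))

theorem fourthPowerTerm_telescoping (n k : ℕ) :
    coeff₂ n * fourthPowerTerm (n + 2) k - coeff₁ n * fourthPowerTerm (n + 1) k -
      coeff₀ n * fourthPowerTerm n k = fourthPowerCert n (k + 1) - fourthPowerCert n k := by
  rw [fourthPowerCert, fourthPowerCert, fourthPowerTerm_succ_right, fourthPowerTerm_eq_succ_left n,
    fourthPowerTerm_eq_succ_left (n + 1), show n + 1 + 1 = n + 2 from rfl]
  simp only [coeff₀, coeff₁, coeff₂]
  push_cast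
  field_simp
  ring

theorem alternatingTerm_telescoping (n k : ℕ) :
    coeff₂ n * alternatingTerm (n + 2) k - coeff₁ n * alternatingTerm (n + 1) k -
      coeff₀ n * alternatingTerm n k = alternatingCert n (k + 1) - alternatingCert n k := by
  have odd (a b : ℕ) (c : ℚ) (hc : c = 2 * a + 1 - 2 * b) : c ≠ 0 :=
    hc ▸ two_mul_add_one_sub_two_mul_ne_zero a b
  -- the odd denominators, in the form in which `field_simp` meets them
  have := odd n k (n * 2 + 1 - 2 * k) (by ring)
  have := odd (n + 1) k (n * 2 + 3 - 2 * k) (by push_cast; ring)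
  have := odd n (k + 1) (n * 2 + 1 - 2 * (k + 1)) (by push_cast; ring)
  have := odd (n + 1) (k + 1) (n * 2 + 3 - 2 * (k + 1)) (by push_cast; ring)
  have := odd (n + 1) k (2 * (n + 2 - k) - 1) (by push_cast; ring)
  have := odd (n + 1) k (2 * (n + 1) + 1 - 2 * k) (by push_cast; ring)
  rw [alternatingCert, alternatingCert, alternatingTerm_succ_right, alternatingTerm_eq_succ_left n,
    alternatingTerm_eq_succ_left (n + 1), show n + 1 + 1 = n + 2 from rfl]
  simp only [coeff₀, coeff₁, coeff₂]
  push_cast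
  field_simp
  ring

theorem rowSum_fourthPowerTerm_recurrence (n : ℕ) :
    coeff₂ n * rowSum fourthPowerTerm (n + 2) =
      coeff₁ n * rowSum fourthPowerTerm (n + 1) + coeff₀ n * rowSum fourthPowerTerm n :=
  rowSum_recurrence_of_telescoping (fun _ _ => fourthPowerTerm_of_lt) n
    (by simp [fourthPowerCert]) (by simp [fourthPowerCert, fourthPowerTerm_of_lt])
    (fourthPowerTerm_telescoping n)

theorem rowSum_alternatingTerm_recurrence (n : ℕ) :
    coeff₂ n * rowSum alternatingTerm (n + 2) =
      coeff₁ n * rowSum alternatingTerm (n + 1) + coeff₀ n * rowSum alternatingTerm n :=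
  rowSum_recurrence_of_telescoping (fun _ _ => alternatingTerm_of_lt) n
    (by simp [alternatingCert]) (by simp [alternatingCert, alternatingTerm_of_lt])
    (alternatingTerm_telescoping n)

theorem rowSum_fourthPowerTerm_eq_rowSum_alternatingTerm :
    rowSum fourthPowerTerm = rowSum alternatingTerm :=
  eq_of_recurrence coeff₂_ne_zero rowSum_fourthPowerTerm_recurrence
    rowSum_alternatingTerm_recurrence (by simp [rowSum, fourthPowerTerm, alternatingTerm])
    (by norm_num [rowSum, sum_range_succ, fourthPowerTerm, alternatingTerm])

end ChooseFourthPowerSum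

theorem stmt_8 (n : ℕ) :
    (∑ k ∈ Finset.range (n + 1), ((n.choose k : ℤ)) ^ 4) =
      ∑ k ∈ Finset.range (n + 1),
        (-1 : ℤ) ^ (n + k) * (n.choose k) * ((n + k).choose n) * ((2 * k).choose k) *
          ((2 * n - 2 * k).choose (n - k)) := by
  have h := congrFun ChooseFourthPowerSum.rowSum_fourthPowerTerm_eq_rowSum_alternatingTerm n
  simp only [rowSum, ChooseFourthPowerSum.fourthPowerTerm,
    ChooseFourthPowerSum.alternatingTerm] at h
  exact_mod_cast h
end

section
/- For every natural number n, ∑_{k=0}^{n} C(n,k)^2 C(n+k,n) = ∑_{k=0}^{n} C(n,k) C(2k,k) C(n+k,n-k). -/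
/-! The sums agree termwise: `C(n+k,n) C(n,k)` and `C(n+k,n-k) C(2k,k)` are both the
multinomial coefficient `(n+k)! / (k! k! (n-k)!)`. -/

theorem Nat.choose_add_mul_choose_of_le {n k : ℕ} (h : k ≤ n) :
    (n + k).choose n * n.choose k = (n + k).choose (n - k) * (2 * k).choose k := by
  have hsplit : (n + k).choose (2 * k) * (2 * k).choose k = (n + k).choose k * n.choose k := by
    simpa [two_mul] using Nat.choose_mul (n := n + k) (k := 2 * k) (s := k) (by omega)
  rw [Nat.choose_symm_of_eq_add (by omega : n + k = (n - k) + 2 * k), hsplit,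
    Nat.choose_symm_add]

theorem stmt_10 (n : ℕ) :
    ∑ k ∈ Finset.range (n + 1), (n.choose k) ^ 2 * ((n + k).choose n) =
      ∑ k ∈ Finset.range (n + 1),
        (n.choose k) * ((2 * k).choose k) * ((n + k).choose (n - k)) := by
  refine Finset.sum_congr rfl fun k hk => ?_
  have hkn : k ≤ n := Nat.lt_succ_iff.mp (Finset.mem_range.mp hk)
  calc n.choose k ^ 2 * (n + k).choose n
      = n.choose k * ((n + k).choose n * n.choose k) := by ring
    _ = n.choose k * ((n + k).choose (n - k) * (2 * k).choose k) := by
      rw [Nat.choose_add_mul_choose_of_le hkn]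
    _ = n.choose k * (2 * k).choose k * (n + k).choose (n - k) := by ring
end

section
/- For every natural number n, the sum over all triples (i,j,k) of natural numbers with i + j + k = 2n of the squared multinomial coefficients ((2n)! / (i! j! k!))^2 equals ∑_{k=0}^{2n} C(2n,k)^2 C(4n-2k, 2n-k). -/
/-!
Write `m = 2n` and split a triple `(i, j, k)` with `i + j + k = m` as `k` followed by a pair
`(i, j)` summing to `m - k`. The trinomial coefficient factors as `C(m, k) * C(m - k, i)`, so the
inner sum over `(i, j)` is the sum of squares of a row of Pascal's triangle, which is
`C(2(m - k), m - k)` by Vandermonde's identity.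
-/

open Finset
open scoped Nat

namespace Nat

theorem factorial_div_factorial_mul_factorial_mul_factorial {i j k m : ℕ} (h : i + j + k = m) :
    m ! / (i ! * j ! * k !) = m.choose k * (m - k).choose i := by
  obtain rfl : j = m - k - i := by omega
  refine Nat.div_eq_of_eq_mul_left (by positivity) ?_
  calc m ! = m.choose k * k ! * (m - k)! := (choose_mul_factorial_mul_factorial (by omega)).symm
    _ = m.choose k * k ! * ((m - k).choose i * i ! * (m - k - i)!) := by
        rw [choose_mul_factorial_mul_factorial (n := m - k) (by omega)]
    _ = _ := by ring

theorem sum_antidiagonal_choose_sq (n : ℕ) :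
    ∑ p ∈ antidiagonal n, n.choose p.1 ^ 2 = (2 * n).choose n := by
  rw [← sum_range_choose_sq,
    Finset.Nat.sum_antidiagonal_eq_sum_range_succ (fun i _ ↦ n.choose i ^ 2)]

end Nat

namespace Finset.Nat

theorem sum_antidiagonalTuple_three {M : Type*} [AddCommMonoid M] (m : ℕ)
    (f : ℕ → ℕ → ℕ → M) :
    ∑ x ∈ antidiagonalTuple 3 m, f (x 0) (x 1) (x 2) =
      ∑ k ∈ range (m + 1), ∑ p ∈ antidiagonal (m - k), f p.1 p.2 k := by
  rw [sum_sigma']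
  refine sum_bij' (fun x _ ↦ ⟨x 2, (x 0, x 1)⟩) (fun p _ ↦ ![p.2.1, p.2.2, p.1])
    ?_ ?_ ?_ ?_ (fun _ _ ↦ rfl)
  · intro x hx
    simp only [mem_antidiagonalTuple, Fin.sum_univ_three] at hx
    simp only [mem_sigma, mem_range, HasAntidiagonal.mem_antidiagonal]
    omega
  · intro p hp
    simp only [mem_sigma, mem_range, HasAntidiagonal.mem_antidiagonal] at hp
    simp only [mem_antidiagonalTuple, Fin.sum_univ_three, Matrix.cons_val_zero,
      Matrix.cons_val_one, Matrix.cons_val_two, Matrix.head_cons, Matrix.tail_cons]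
    omega
  · intro x _
    ext i
    fin_cases i <;> rfl
  · intro p _
    rfl

end Finset.Nat

theorem stmt_12 (n : ℕ) :
    ∑ x ∈ Finset.Nat.antidiagonalTuple 3 (2 * n),
        ((2 * n).factorial /
            ((x 0).factorial * (x 1).factorial * (x 2).factorial)) ^ 2 =
      ∑ k ∈ Finset.range (2 * n + 1),
        ((2 * n).choose k) ^ 2 * ((4 * n - 2 * k).choose (2 * n - k)) := by
  rw [Finset.Nat.sum_antidiagonalTuple_three (2 * n) fun i j k ↦
    ((2 * n)! / (i ! * j ! * k !)) ^ 2]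
  refine sum_congr rfl fun k hk ↦ ?_
  have hk : k ≤ 2 * n := Nat.lt_succ_iff.mp (mem_range.mp hk)
  calc ∑ p ∈ antidiagonal (2 * n - k), ((2 * n)! / (p.1 ! * p.2 ! * k !)) ^ 2
      = ∑ p ∈ antidiagonal (2 * n - k), (2 * n).choose k ^ 2 * (2 * n - k).choose p.1 ^ 2 := by
        refine sum_congr rfl fun p hp ↦ ?_
        rw [Nat.factorial_div_factorial_mul_factorial_mul_factorial (by
          rw [HasAntidiagonal.mem_antidiagonal] at hp; omega), mul_pow]
    _ = (2 * n).choose k ^ 2 * (4 * n - 2 * k).choose (2 * n - k) := by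
        rw [← mul_sum, Nat.sum_antidiagonal_choose_sq,
          show 4 * n - 2 * k = 2 * (2 * n - k) by omega]
end

section
/- For every natural number n, ∑_{k=0}^{n} C(n,k)^2 C(2n+k,n) C(3n+k,n) = C(2n,n) * C(3n,n)^2. -/
open Finset Nat

/-!
Both sides satisfy the first-order recurrence
`2 (n+1)^3 (2n+1) S(n+1) = 9 (3n+1)^2 (3n+2)^2 S(n)` and agree at `n = 0`.
For the closed form this is a factorial computation. For the sum `S(n) = ∑ₖ F(n,k)` it is
Zeilberger's creative telescoping: with the certificate `G(n,k) = R(n,k) F(n,k)`, `R` rational,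
the recurrence operator applied to `F(n,k)` equals `G(n,k) - G(n,k-1)`, which sums to zero.
That identity is a rational-function identity once `F(n,k+1)` and `F(n+1,k+1)` are written as
rational multiples of `F(n,k)`, read off from `F(k+m,k) = (4k+3m)! / ((k! m!)^2 (2k+m)!)`.
-/

lemma eq_of_mul_succ_eq_s13 {M : Type*} [MonoidWithZero M] [IsLeftCancelMulZero M] {a b f g : ℕ → M}
    (hb : ∀ n, b n ≠ 0) (hf : ∀ n, b n * f (n + 1) = a n * f n)
    (hg : ∀ n, b n * g (n + 1) = a n * g n) (h₀ : f 0 = g 0) : f = g := by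
  funext n
  induction n with
  | zero => exact h₀
  | succ n ih => exact mul_left_cancel₀ (hb n) (by rw [hf, hg, ih])

namespace BinomialSum

def term (n k : ℕ) : ℕ := n.choose k ^ 2 * (2 * n + k).choose n * (3 * n + k).choose n

lemma cast_term_add (k m : ℕ) :
    (term (k + m) k : ℚ) = (4 * k + 3 * m)! / ((k ! * m !) ^ 2 * (2 * k + m)!) := by
  rw [term, show 2 * (k + m) + k = (k + m) + (2 * k + m) by ring,
    show 3 * (k + m) + k = (k + m) + (3 * k + 2 * m) by ring]
  push_cast [Nat.cast_add_choose]
  rw [show (k + m) + (2 * k + m) = 3 * k + 2 * m by ring,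
    show (k + m) + (3 * k + 2 * m) = 4 * k + 3 * m by ring]
  field_simp

lemma term_self_succ (n : ℕ) : term n (n + 1) = 0 := by
  simp [term, Nat.choose_succ_self]

lemma cast_term_succ_right {n k : ℕ} (hk : k ≤ n) :
    (term n (k + 1) : ℚ) = (n - k) ^ 2 * (3 * n + k + 1) / ((k + 1) ^ 2 * (n + k + 1)) * term n k := by
  obtain ⟨m, rfl⟩ := Nat.exists_eq_add_of_le hk
  cases m with
  | zero => simp [term_self_succ]
  | succ m =>
    rw [cast_term_add k (m + 1), show k + (m + 1) = (k + 1) + m by ring, cast_term_add,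
      show 4 * (k + 1) + 3 * m = 4 * k + 3 * (m + 1) + 1 by ring,
      show 2 * (k + 1) + m = 2 * k + (m + 1) + 1 by ring]
    push_cast [Nat.factorial_succ]
    field_simp
    ring

lemma cast_term_succ_succ {n k : ℕ} (hk : k ≤ n) :
    (term (n + 1) (k + 1) : ℚ) = (3 * n + k + 1) * (3 * n + k + 2) * (3 * n + k + 3) * (3 * n + k + 4)
      / ((k + 1) ^ 2 * (n + k + 1) * (n + k + 2)) * term n k := by
  obtain ⟨m, rfl⟩ := Nat.exists_eq_add_of_le hk
  rw [show k + m + 1 = (k + 1) + m by ring, cast_term_add, cast_term_add,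
    show 4 * (k + 1) + 3 * m = 4 * k + 3 * m + 4 by ring,
    show 2 * (k + 1) + m = 2 * k + m + 2 by ring]
  push_cast [Nat.factorial_succ]
  field_simp
  ring

lemma cast_term_succ_zero (n : ℕ) :
    (term (n + 1) 0 : ℚ) = (3 * n + 1) * (3 * n + 2) * (3 * n + 3) / (n + 1) ^ 3 * term n 0 := by
  have h := cast_term_add 0
  simp only [zero_add, mul_zero] at h
  rw [h, h, show 3 * (n + 1) = 3 * n + 3 by ring]
  push_cast [Nat.factorial_succ]
  field_simp
  ring

def coeff₀ (n : ℕ) : ℚ := 9 * (3 * n + 1) ^ 2 * (3 * n + 2) ^ 2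

def coeff₁ (n : ℕ) : ℚ := 2 * (n + 1) ^ 3 * (2 * n + 1)

/-- Zeilberger's algorithm produces this certificate. -/
def certificatePoly (x y : ℚ) : ℚ :=
  -1 + 84 * y - 59 * y ^ 2 + x * (78 + 294 * y - 186 * y ^ 2)
    + x ^ 2 * (340 + 294 * y - 145 * y ^ 2) + x ^ 3 * (468 + 66 * y) + 207 * x ^ 4

def certificate (n k : ℕ) : ℚ :=
  (3 * n + k + 1) / (n + k + 1) * certificatePoly n (k + 1) * term n k

lemma telescope_zero (n : ℕ) :
    coeff₀ n * term n 0 - coeff₁ n * term (n + 1) 0 = certificate n 0 := by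
  rw [cast_term_succ_zero, coeff₀, coeff₁, certificate, certificatePoly]
  field_simp
  ring

lemma telescope_succ {n k : ℕ} (hk : k ≤ n) :
    coeff₀ n * term n (k + 1) - coeff₁ n * term (n + 1) (k + 1)
      = certificate n (k + 1) - certificate n k := by
  rw [certificate, certificate, cast_term_succ_succ hk, cast_term_succ_right hk, coeff₀, coeff₁,
    certificatePoly, certificatePoly]
  push_cast
  field_simp
  ring

lemma certificate_self_succ (n : ℕ) : certificate n (n + 1) = 0 := by
  simp [certificate, term_self_succ]

lemma recurrence_sum_term (n : ℕ) :
    coeff₁ n * ∑ k ∈ range (n + 2), (term (n + 1) k : ℚ)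
      = coeff₀ n * ∑ k ∈ range (n + 1), (term n k : ℚ) := by
  have htel : ∑ k ∈ range (n + 2), (coeff₀ n * term n k - coeff₁ n * term (n + 1) k) = 0 := by
    rw [sum_range_succ', sum_congr rfl fun k hk => telescope_succ (Nat.lt_succ_iff.mp (mem_range.mp hk)),
      sum_range_sub, telescope_zero, certificate_self_succ]
    ring
  rw [sum_sub_distrib, ← mul_sum, ← mul_sum, sum_range_succ (fun k => (term n k : ℚ)),
    term_self_succ] at htel
  push_cast at htel
  linarith

def closedForm (n : ℕ) : ℕ := (2 * n).choose n * (3 * n).choose n ^ 2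

lemma cast_closedForm (n : ℕ) : (closedForm n : ℚ) = (3 * n)! ^ 2 / (n ! ^ 4 * (2 * n)!) := by
  rw [closedForm, two_mul, show 3 * n = n + 2 * n by ring, two_mul]
  push_cast [Nat.cast_add_choose]
  field_simp

lemma recurrence_closedForm (n : ℕ) :
    coeff₁ n * closedForm (n + 1) = coeff₀ n * closedForm n := by
  rw [cast_closedForm, cast_closedForm, coeff₀, coeff₁,
    show 2 * (n + 1) = 2 * n + 2 by ring, show 3 * (n + 1) = 3 * n + 3 by ring]
  push_cast [Nat.factorial_succ]
  field_simp
  ring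

end BinomialSum

open BinomialSum in
theorem stmt_13 (n : ℕ) :
    ∑ k ∈ Finset.range (n + 1),
        (n.choose k) ^ 2 * ((2 * n + k).choose n) * ((3 * n + k).choose n) =
      ((2 * n).choose n) * ((3 * n).choose n) ^ 2 := by
  have h := eq_of_mul_succ_eq_s13 (f := fun n => ∑ k ∈ range (n + 1), (term n k : ℚ))
    (g := fun n => (closedForm n : ℚ)) (fun n => by simp only [coeff₁]; positivity)
    recurrence_sum_term recurrence_closedForm (by simp [term, closedForm])
  exact_mod_cast congrFun h n
end

section
/- For every natural number p, setting n = 2p, one has ∑_{k=0}^{n} (-1)^{p+k} C(n,k) C(n+k,n) C(2n-k,n) = C(3p,p) * C(2p,p), as integers. -/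
/-!
Expanding `C(n+k, n)` and `C(2n-k, n)` by Vandermonde's convolution and summing over `k` first
(an alternating sum that collapses to a single term) turns the left-hand side into `(-1)^p` times
Dixon's sum `D p = ∑ (-1)^k C(2p, k)^3`. Dixon's sum is evaluated by the Wilf–Zeilberger method:
a rational certificate shows `(p+1)^3 D(p+1) = -(3p+1)(3p+2)(3p+3) D p`, the recurrence satisfied by
`(-1)^p (3p)! / p!^3 = (-1)^p C(3p, p) C(2p, p)`.
-/

open Finset
open scoped Nat

namespace Dixon

theorem cast_choose_mul_succ_eq {R : Type*} [CommRing R] (m k : ℕ) :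
    (m.choose k : R) * (m + 1) = ((m + 1).choose k : R) * (m + 1 - k) := by
  rcases le_or_gt k (m + 1) with h | h
  · have := congrArg (Nat.cast : ℕ → R) (Nat.choose_mul_succ_eq m k)
    push_cast [h] at this
    exact this
  · simp [Nat.choose_eq_zero_of_lt h, Nat.choose_eq_zero_of_lt (by omega : m < k)]

theorem choose_mul_choose_sub_comm (n a b : ℕ) :
    n.choose a * (n - a).choose b = n.choose b * (n - b).choose a := by
  have ha := Nat.choose_mul (n := n) (Nat.le_add_right a b)
  have hb := Nat.choose_mul (n := n) (Nat.le_add_left b a)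
  rw [Nat.add_sub_cancel_left] at ha
  rw [Nat.add_sub_cancel] at hb
  rw [← ha, ← hb, Nat.choose_symm_add]

theorem sum_range_neg_one_pow_mul_choose_of_le {m N : ℕ} (h : m ≤ N) :
    ∑ i ∈ range (N + 1), (-1 : ℤ) ^ i * m.choose i = if m = 0 then 1 else 0 := by
  rw [← Int.alternating_sum_range_choose]
  refine (sum_subset (range_subset_range.2 (by omega)) fun i _ hi => ?_).symm
  simp [Nat.choose_eq_zero_of_lt (by simpa using hi : m < i)]

theorem sum_neg_one_pow_mul_choose_mul_choose_mul_choose {n c : ℕ} (hc : c ≤ n) (d : ℕ) :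
    ∑ k ∈ range (n + 1), (-1 : ℤ) ^ k * n.choose k * k.choose c * (n - k).choose d
      = if c + d = n then (-1 : ℤ) ^ c * n.choose c else 0 := by
  obtain ⟨m, rfl⟩ := Nat.exists_eq_add_of_le hc
  have hterm : ∀ j, (-1 : ℤ) ^ (c + j) * (c + m).choose (c + j) * (c + j).choose c
        * (c + m - (c + j)).choose d
      = (-1) ^ c * (c + m).choose c * (m.choose d * ((-1) ^ j * (m - d).choose j)) := by
    intro j
    have h₁ := Nat.choose_mul (n := c + m) (Nat.le_add_right c j)
    have h₂ := choose_mul_choose_sub_comm m j d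
    rw [Nat.add_sub_cancel_left, Nat.add_sub_cancel_left] at h₁
    zify at h₁ h₂
    rw [Nat.add_sub_add_left, pow_add]
    linear_combination ((-1 : ℤ) ^ c * (-1) ^ j * (m - j).choose d) * h₁
      + ((-1 : ℤ) ^ c * (-1) ^ j * (c + m).choose c) * h₂
  have hsmall : ∀ k ∈ range c,
      (-1 : ℤ) ^ k * (c + m).choose k * k.choose c * (c + m - k).choose d = 0 := by
    intro k hk
    simp [Nat.choose_eq_zero_of_lt (mem_range.1 hk)]
  rw [show c + m + 1 = c + (m + 1) by ring, sum_range_add, sum_eq_zero hsmall, zero_add,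
    sum_congr rfl fun j _ => hterm j, ← mul_sum, ← mul_sum]
  rcases le_or_gt d m with hd | hd
  · rw [sum_range_neg_one_pow_mul_choose_of_le (by omega : m - d ≤ m)]
    by_cases hdm : d = m
    · subst hdm; simp
    · simp [hdm, show m - d ≠ 0 by omega]
  · simp [Nat.choose_eq_zero_of_lt hd, show d ≠ m by omega]

theorem cast_add_choose_eq_sum_range (m n : ℕ) :
    ((m + n).choose n : ℤ) = ∑ j ∈ range (n + 1), (m.choose j : ℤ) * n.choose (n - j) := by
  rw [Nat.add_choose_eq, Nat.sum_antidiagonal_eq_sum_range_succ_mk]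
  push_cast
  rfl

theorem sum_neg_one_pow_choose_mul_add_choose_mul_sub_choose (n : ℕ) :
    ∑ k ∈ range (n + 1), (-1 : ℤ) ^ k * n.choose k * (n + k).choose n * (2 * n - k).choose n
      = ∑ j ∈ range (n + 1), (-1 : ℤ) ^ j * n.choose j ^ 3 := by
  have hexpand : ∀ k ∈ range (n + 1),
      (-1 : ℤ) ^ k * n.choose k * (n + k).choose n * (2 * n - k).choose n
        = ∑ j ∈ range (n + 1), ∑ b ∈ range (n + 1),
            (n.choose (n - j) * n.choose (n - b) : ℤ)
              * ((-1) ^ k * n.choose k * k.choose j * (n - k).choose b) := by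
    intro k hk
    rw [show 2 * n - k = n - k + n by have := mem_range_succ_iff.1 hk; omega, add_comm n k,
      cast_add_choose_eq_sum_range, cast_add_choose_eq_sum_range]
    simp only [mul_sum, sum_mul]
    rw [sum_comm]
    exact sum_congr rfl fun j _ => sum_congr rfl fun b _ => by ring
  rw [sum_congr rfl hexpand, sum_comm]
  refine sum_congr rfl fun j hjn => ?_
  have hj : j ≤ n := mem_range_succ_iff.1 hjn
  rw [sum_comm]
  simp only [← mul_sum, sum_neg_one_pow_mul_choose_mul_choose_mul_choose hj, mul_ite, mul_zero]
  have hcond : ∀ b, j + b = n ↔ n - j = b := fun b => by omega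
  simp only [hcond, sum_ite_eq, mem_range, Nat.sub_sub_self hj, Nat.choose_symm hj,
    show n - j < n + 1 by omega, if_true]
  ring

-- Gosper certificate produced by Zeilberger's algorithm for `dixonTerm`
def wzPoly (n k : ℤ) : ℤ :=
  (-116 + 207*k - 147*k^2 + 48*k^3 - 6*k^4)
  + n*(-900 + 1320*k - 741*k^2 + 180*k^3 - 15*k^4)
  + n^2*(-2868 + 3327*k - 1386*k^2 + 222*k^3 - 9*k^4)
  + n^3*(-4812 + 4146*k - 1140*k^2 + 90*k^3)
  + n^4*(-4488 + 2556*k - 348*k^2)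
  + n^5*(-2208 + 624*k) + n^6*(-448)

def dixonTerm (n k : ℕ) : ℤ := (-1) ^ k * ((2 * n).choose k : ℤ) ^ 3

def dixonRecTerm (n k : ℕ) : ℤ :=
  ((n : ℤ) + 1) ^ 3 * dixonTerm (n + 1) k
    + (3 * (n : ℤ) + 1) * (3 * n + 2) * (3 * n + 3) * dixonTerm n k

def wzPartner (n k : ℕ) : ℤ :=
  (-1) ^ (k + 1) * ((2 * n + 1).choose k : ℤ) ^ 3 * wzPoly n (k + 1)

theorem dixonRecTerm_zero (n : ℕ) :
    2 * (2 * (n : ℤ) + 1) ^ 3 * dixonRecTerm n 0 = wzPartner n 0 := by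
  simp only [dixonRecTerm, dixonTerm, wzPartner, wzPoly, Nat.choose_zero_right]
  push_cast
  ring

theorem dixonRecTerm_succ (n k : ℕ) :
    2 * (2 * (n : ℤ) + 1) ^ 3 * dixonRecTerm n (k + 1)
      = wzPartner n (k + 1) - wzPartner n k := by
  -- every binomial coefficient involved is `C(2n+2, k+1)` times a rational function of `n`, `k`
  have h₁ := cast_choose_mul_succ_eq (R := ℚ) (2 * n + 1) (k + 1)
  have h₂ := cast_choose_mul_succ_eq (R := ℚ) (2 * n) (k + 1)
  have h₃ : ((2 * n + 1).choose k : ℚ) * (2 * n + 1 + 1)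
      = (2 * n + 1 + 1).choose (k + 1) * (k + 1) := by
    exact_mod_cast (mul_comm _ _).trans (Nat.add_one_mul_choose_eq (2 * n + 1) k)
  push_cast at h₁ h₂
  apply Int.cast_injective (α := ℚ)
  simp only [dixonRecTerm, dixonTerm, wzPartner, wzPoly, show 2 * (n + 1) = 2 * n + 1 + 1 by ring]
  push_cast
  rw [eq_div_of_mul_eq (by positivity) h₂, eq_div_of_mul_eq (by positivity) h₃,
    eq_div_of_mul_eq (by positivity) h₁]
  field_simp
  ring

theorem two_mul_cube_mul_sum_dixonRecTerm (n N : ℕ) :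
    2 * (2 * (n : ℤ) + 1) ^ 3 * ∑ k ∈ range (N + 1), dixonRecTerm n k = wzPartner n N := by
  induction N with
  | zero => simpa using dixonRecTerm_zero n
  | succ N ih => rw [sum_range_succ, mul_add, ih, dixonRecTerm_succ]; ring

def dixonSum (n : ℕ) : ℤ := ∑ k ∈ range (2 * n + 1), dixonTerm n k

theorem sum_range_dixonTerm {n N : ℕ} (h : 2 * n + 1 ≤ N) :
    ∑ k ∈ range N, dixonTerm n k = dixonSum n := by
  refine (sum_subset (range_subset_range.2 h) fun k _ hk => ?_).symm
  simp [dixonTerm, Nat.choose_eq_zero_of_lt (by simpa using hk : 2 * n < k)]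

theorem dixonSum_succ (n : ℕ) :
    ((n : ℤ) + 1) ^ 3 * dixonSum (n + 1)
      = -((3 * (n : ℤ) + 1) * (3 * n + 2) * (3 * n + 3)) * dixonSum n := by
  have htel := two_mul_cube_mul_sum_dixonRecTerm n (2 * n + 2)
  have hvanish : wzPartner n (2 * n + 2) = 0 := by simp [wzPartner]
  simp only [hvanish, dixonRecTerm, sum_add_distrib, ← mul_sum,
    sum_range_dixonTerm (by omega : 2 * (n + 1) + 1 ≤ 2 * n + 2 + 1),
    sum_range_dixonTerm (by omega : 2 * n + 1 ≤ 2 * n + 2 + 1)] at htel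
  have : (2 * (2 * (n : ℤ) + 1) ^ 3) ≠ 0 := by positivity
  linear_combination (mul_eq_zero.1 htel).resolve_left this

theorem dixonSum_mul_factorial_cube (n : ℕ) :
    dixonSum n * (n ! : ℤ) ^ 3 = (-1) ^ n * (3 * n)! := by
  induction n with
  | zero => simp [dixonSum, dixonTerm]
  | succ n ih =>
    rw [show 3 * (n + 1) = 3 * n + 2 + 1 by ring]
    push_cast [Nat.factorial_succ]
    linear_combination (n ! : ℤ) ^ 3 * dixonSum_succ n
      - (3 * (n : ℤ) + 1) * (3 * n + 2) * (3 * n + 3) * ih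

theorem choose_three_mul_mul_choose_two_mul_mul_factorial_cube (n : ℕ) :
    (3 * n).choose n * (2 * n).choose n * n ! ^ 3 = (3 * n)! := by
  have h₃ := Nat.choose_mul_factorial_mul_factorial (by omega : n ≤ 3 * n)
  have h₂ := Nat.choose_mul_factorial_mul_factorial (by omega : n ≤ 2 * n)
  rw [show 3 * n - n = 2 * n by omega, ← h₂, show 2 * n - n = n by omega] at h₃
  rw [← h₃]
  ring

theorem dixonSum_eq (n : ℕ) : dixonSum n = (-1) ^ n * (3 * n).choose n * (2 * n).choose n := by
  have hne : (n ! : ℤ) ^ 3 ≠ 0 := by positivity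
  apply mul_right_cancel₀ hne
  rw [dixonSum_mul_factorial_cube, ← choose_three_mul_mul_choose_two_mul_mul_factorial_cube]
  push_cast
  ring

end Dixon

theorem stmt_15 (p : ℕ) :
    ∑ k ∈ Finset.range (2 * p + 1),
        (-1 : ℤ) ^ (p + k) * ((2 * p).choose k) * ((2 * p + k).choose (2 * p)) *
          ((2 * (2 * p) - k).choose (2 * p)) =
      ((3 * p).choose p) * ((2 * p).choose p) := by
  calc _ = (-1) ^ p * ∑ k ∈ range (2 * p + 1), (-1 : ℤ) ^ k * (2 * p).choose k
          * (2 * p + k).choose (2 * p) * (2 * (2 * p) - k).choose (2 * p) := by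
        rw [mul_sum]
        exact sum_congr rfl fun k _ => by ring
    _ = (-1) ^ p * Dixon.dixonSum p := by
        rw [Dixon.sum_neg_one_pow_choose_mul_add_choose_mul_sub_choose]
        rfl
    _ = _ := by
        rw [Dixon.dixonSum_eq, ← mul_assoc, ← mul_assoc, ← pow_add, Even.neg_one_pow ⟨p, rfl⟩,
          one_mul]
end

section
/- For every natural number n, C(2n,n)^2 * ∑_{k=0}^{n} C(n,k)^3 = ∑_{k=0}^{n} C(n,k) C(n+k,n) C(2n-k,n) C(2n,k) C(2n,n-k). -/
/-! The identity holds termwise: after writing `C(2n,n)² C(n,k)³` as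
`C(n,k) · (C(2n,n) C(n,k)) · (C(2n,n) C(n,k))`, the two factors in parentheses are rewritten by
the subset-of-a-subset identity, once choosing the `k`-subset first and once (via
`C(n,k) = C(n,n-k)`) the `(n-k)`-subset first. -/

namespace Nat

theorem choose_mul_choose_eq_choose_mul_choose_sub {m n k : ℕ} (hkn : k ≤ n) (hnm : n ≤ m) :
    m.choose n * n.choose k = m.choose k * (m - k).choose (m - n) := by
  rw [choose_mul hkn, ← choose_symm (show n - k ≤ m - k by omega)]
  congr 2
  omega

theorem two_mul_choose_mul_choose_eq_choose_mul_choose_sub {n k : ℕ} (hkn : k ≤ n) :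
    (2 * n).choose n * n.choose k = (2 * n).choose k * (2 * n - k).choose n := by
  rw [choose_mul_choose_eq_choose_mul_choose_sub hkn (by omega)]
  congr 2
  omega

theorem two_mul_choose_mul_choose_eq_choose_sub_mul_choose_add {n k : ℕ} (hkn : k ≤ n) :
    (2 * n).choose n * n.choose k = (2 * n).choose (n - k) * (n + k).choose n := by
  rw [← choose_symm hkn,
    choose_mul_choose_eq_choose_mul_choose_sub (sub_le n k) (show n ≤ 2 * n by omega)]
  congr 2 <;> omega

end Nat

theorem stmt_16 (n : ℕ) :
    ((2 * n).choose n) ^ 2 * ∑ k ∈ Finset.range (n + 1), (n.choose k) ^ 3 =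
      ∑ k ∈ Finset.range (n + 1),
        (n.choose k) * ((n + k).choose n) * ((2 * n - k).choose n) * ((2 * n).choose k) *
          ((2 * n).choose (n - k)) := by
  rw [Finset.mul_sum]
  refine Finset.sum_congr rfl fun k hk => ?_
  have hkn : k ≤ n := Nat.lt_succ_iff.mp (Finset.mem_range.mp hk)
  calc (2 * n).choose n ^ 2 * n.choose k ^ 3
      = n.choose k * ((2 * n).choose n * n.choose k) * ((2 * n).choose n * n.choose k) := by ring
    _ = n.choose k * ((2 * n).choose (n - k) * (n + k).choose n) *
          ((2 * n).choose k * (2 * n - k).choose n) := by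
      rw [← Nat.two_mul_choose_mul_choose_eq_choose_sub_mul_choose_add hkn,
        ← Nat.two_mul_choose_mul_choose_eq_choose_mul_choose_sub hkn]
    _ = n.choose k * (n + k).choose n * (2 * n - k).choose n * (2 * n).choose k *
          (2 * n).choose (n - k) := by ring
end

section
/- For every natural number n, C(2n,n)^2 * ∑_{k=0}^{n} C(n,k)^2 C(3n,n+k) = ((3n)! / (n!)^3) * ∑_{k=0}^{n} C(n,k) C(2n,k) C(2k,n). -/
/-!
After the termwise identity `C(2n,n) C(n,k) C(3n,n+k) = C(3n,n) C(2n,k) C(2n,n-k)` and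
`(3n)!/(n!)^3 = C(3n,n) C(2n,n)`, it remains to show
`∑ C(n,k) C(2n,n-k) C(2n,k) = ∑ C(n,k) C(2n,k) C(2k,n)`. Both sides are the coefficient of
`x^n y^n` in `(1+x+y)^n (1+x+xy)^(2n)`: extracting `y^n` first gives the left side, while
extracting `x^n` first, after regrouping as `(1+y+x)^n (1+(1+y)x)^(2n)`, gives the right side.
-/

open Polynomial Finset
open scoped Polynomial.Bivariate

namespace Polynomial

theorem coeff_C_add_C_mul_X_pow {R : Type*} [CommSemiring R] (a b : R) (m i : ℕ) :
    ((C a + C b * X) ^ m).coeff i = a ^ (m - i) * m.choose i * b ^ i := by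
  rw [show (C a + C b * X) ^ m = ((X + C a) ^ m).comp (C b * X) by simp [add_comm],
    comp_C_mul_X_coeff, coeff_X_add_C_pow]

theorem coeff_C_add_X_pow_mul_C_add_C_mul_X_pow {R : Type*} [CommSemiring R] (a b c : R)
    (m p i : ℕ) :
    ((C a + X) ^ m * (C b + C c * X) ^ p).coeff i =
      ∑ jk ∈ antidiagonal i,
        a ^ (m - jk.1) * m.choose jk.1 * (b ^ (p - jk.2) * p.choose jk.2 * c ^ jk.2) := by
  rw [coeff_mul, add_comm (C a)]
  simp only [coeff_X_add_C_pow, coeff_C_add_C_mul_X_pow]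

theorem Bivariate.coeff_coeff_swap {R : Type*} [CommSemiring R] (p : R[X][Y]) (i j : ℕ) :
    ((Bivariate.swap p).coeff i).coeff j = (p.coeff j).coeff i := by
  induction p using Polynomial.induction_on' with
  | add p q hp hq => simp [hp, hq]
  | monomial n a =>
    induction a using Polynomial.induction_on' with
    | add a b ha hb => simp_all
    | monomial m r =>
      rw [Bivariate.swap_monomial_monomial]
      simp only [coeff_monomial]
      split_ifs <;> simp_all [coeff_monomial]

end Polynomial

noncomputable def bivariateGF (n : ℕ) : ℕ[X][Y] :=
  (C (1 + X) + Y) ^ n * (C (1 + X) + C X * Y) ^ (2 * n)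

theorem coeff_coeff_bivariateGF (n : ℕ) :
    ((bivariateGF n).coeff n).coeff n =
      ∑ k ∈ range (n + 1), n.choose k * (2 * n).choose (n - k) * (2 * n).choose k := by
  rw [bivariateGF, coeff_C_add_X_pow_mul_C_add_C_mul_X_pow,
    Nat.sum_antidiagonal_eq_sum_range_succ_mk, finsetSum_coeff]
  refine sum_congr rfl fun k hk => ?_
  have hk : k ≤ n := Nat.lt_succ_iff.mp (mem_range.mp hk)
  rw [show (1 + X : ℕ[X]) ^ (n - k) * (n.choose k : ℕ[X]) *
      ((1 + X) ^ (2 * n - (n - k)) * ((2 * n).choose (n - k) : ℕ[X]) * X ^ (n - k)) =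
      C (n.choose k * (2 * n).choose (n - k)) * (1 + X) ^ (2 * n) * X ^ (n - k) by
    rw [← pow_mul_pow_sub (1 + X : ℕ[X]) (show n - k ≤ 2 * n by omega)]
    simp only [← C_eq_natCast, Nat.cast_id, map_mul]
    ring]
  rw [coeff_mul_X_pow', if_pos (Nat.sub_le n k), Nat.sub_sub_self hk, coeff_C_mul,
    coeff_one_add_X_pow, Nat.cast_id]

theorem coeff_coeff_swap_bivariateGF (n : ℕ) :
    ((Bivariate.swap (bivariateGF n)).coeff n).coeff n =
      ∑ k ∈ range (n + 1), n.choose k * (2 * n).choose k * (2 * k).choose n := by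
  have hswap : Bivariate.swap (bivariateGF n) =
      (C (1 + X) + Y) ^ n * (C 1 + C (1 + X) * Y) ^ (2 * n) := by
    simp [bivariateGF, Bivariate.swap_C, Bivariate.swap_Y]
    ring
  rw [hswap, coeff_C_add_X_pow_mul_C_add_C_mul_X_pow, ← Nat.sum_antidiagonal_swap,
    Nat.sum_antidiagonal_eq_sum_range_succ_mk, finsetSum_coeff]
  refine sum_congr rfl fun k hk => ?_
  have hk : k ≤ n := Nat.lt_succ_iff.mp (mem_range.mp hk)
  rw [Prod.fst_swap, Prod.snd_swap, Nat.sub_sub_self hk, Nat.choose_symm hk]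
  rw [show (1 + X : ℕ[X]) ^ k * (n.choose k : ℕ[X]) *
      (1 ^ (2 * n - k) * ((2 * n).choose k : ℕ[X]) * (1 + X) ^ k) =
      C (n.choose k * (2 * n).choose k) * (1 + X) ^ (2 * k) by
    simp only [← C_eq_natCast, Nat.cast_id, map_mul, one_pow]
    ring]
  rw [coeff_C_mul, coeff_one_add_X_pow, Nat.cast_id]

theorem sum_choose_mul_choose_sub_eq_sum_choose_mul_choose_two_mul (n : ℕ) :
    ∑ k ∈ range (n + 1), n.choose k * (2 * n).choose (n - k) * (2 * n).choose k =
      ∑ k ∈ range (n + 1), n.choose k * (2 * n).choose k * (2 * k).choose n := by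
  rw [← coeff_coeff_bivariateGF, ← coeff_coeff_swap_bivariateGF,
    Bivariate.coeff_coeff_swap]

theorem choose_mul_choose_mul_choose_three_mul {n k : ℕ} (hk : k ≤ n) :
    (2 * n).choose n * n.choose k * (3 * n).choose (n + k) =
      (3 * n).choose n * (2 * n).choose k * (2 * n).choose (n - k) := by
  have key : ((2 * n).choose n * n.choose k * (3 * n).choose (n + k) : ℚ) =
      (3 * n).choose n * (2 * n).choose k * (2 * n).choose (n - k) := by
    rw [Nat.cast_choose ℚ (show n ≤ 2 * n by omega), Nat.cast_choose ℚ hk,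
      Nat.cast_choose ℚ (show n + k ≤ 3 * n by omega),
      Nat.cast_choose ℚ (show n ≤ 3 * n by omega),
      Nat.cast_choose ℚ (show k ≤ 2 * n by omega),
      Nat.cast_choose ℚ (show n - k ≤ 2 * n by omega),
      show 2 * n - n = n by omega, show 3 * n - (n + k) = 2 * n - k by omega,
      show 3 * n - n = 2 * n by omega, show 2 * n - (n - k) = n + k by omega]
    field_simp
  exact_mod_cast key

theorem choose_mul_sum_choose_sq_mul_choose_three_mul (n : ℕ) :
    (2 * n).choose n * ∑ k ∈ range (n + 1), n.choose k ^ 2 * (3 * n).choose (n + k) =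
      (3 * n).choose n *
        ∑ k ∈ range (n + 1), n.choose k * (2 * n).choose (n - k) * (2 * n).choose k := by
  rw [mul_sum, mul_sum]
  refine sum_congr rfl fun k hk => ?_
  linear_combination n.choose k *
    choose_mul_choose_mul_choose_three_mul (Nat.lt_succ_iff.mp (mem_range.mp hk))

theorem three_mul_factorial_div_factorial_pow_three (n : ℕ) :
    (3 * n).factorial / n.factorial ^ 3 = (3 * n).choose n * (2 * n).choose n := by
  have h3 := Nat.choose_mul_factorial_mul_factorial (show n ≤ 3 * n by omega)
  have h2 := Nat.choose_mul_factorial_mul_factorial (show n ≤ 2 * n by omega)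
  rw [show 3 * n - n = 2 * n by omega] at h3
  rw [show 2 * n - n = n by omega] at h2
  refine Nat.div_eq_of_eq_mul_left (by positivity) ?_
  rw [← h3, ← h2]
  ring

theorem stmt_18 (n : ℕ) :
    ((2 * n).choose n) ^ 2 *
        ∑ k ∈ Finset.range (n + 1), (n.choose k) ^ 2 * ((3 * n).choose (n + k)) =
      ((3 * n).factorial / (n.factorial) ^ 3) *
        ∑ k ∈ Finset.range (n + 1),
          (n.choose k) * ((2 * n).choose k) * ((2 * k).choose n) := by
  rw [three_mul_factorial_div_factorial_pow_three,
    ← sum_choose_mul_choose_sub_eq_sum_choose_mul_choose_two_mul, sq, mul_assoc,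
    choose_mul_sum_choose_sq_mul_choose_three_mul]
  ring
end

section
/- For every natural number n, the double sum ∑_{i=0}^{n} ∑_{j=0}^{n} (-1)^{i+j} C(n,i) C(n,j) C(i+j,n)^2 equals C(2n,n), as integers. -/
/-!
In `ℤ[x, y]` put `P = (1 + x)(1 + y)`, so that the coefficient of `xⁿyⁿ` in `P ^ s` is
`C(s, n)²`. The double sum is therefore the coefficient of `xⁿyⁿ` in
`(1 - P) ^ n * (1 - P) ^ n = (x(1 + y) + y) ^ (2n)`, and reading off `xⁿ` first gives
`C(2n, n) yⁿ (1 + y)ⁿ`, whose coefficient of `yⁿ` is `C(2n, n)`.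
Here `x` is the outer variable `X` and `y` the inner one `C X` of `ℤ[X][X]`.
-/

open Polynomial Finset

theorem one_sub_pow_eq_sum {R : Type*} [CommRing R] (x : R) (n : ℕ) :
    (1 - x) ^ n = ∑ i ∈ range (n + 1), ((-1) ^ i * n.choose i : ℤ) • x ^ i := by
  rw [sub_eq_neg_add, add_pow]
  refine sum_congr rfl fun i _ => ?_
  rw [one_pow, mul_one, zsmul_eq_mul]
  push_cast
  ring

theorem coeff_coeff_one_add_X_mul_one_add_C_X_pow {R : Type*} [CommSemiring R] (s m k : ℕ) :
    ((((1 + X) * (1 + C X) : R[X][X]) ^ s).coeff m).coeff k = s.choose m * s.choose k := by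
  rw [mul_pow, ← C_1, ← C_add, ← C_pow, mul_comm, coeff_C_mul, C_1, coeff_one_add_X_pow,
    ← C_eq_natCast, coeff_mul_C, coeff_one_add_X_pow, mul_comm]

theorem coeff_C_mul_X_add_C_pow {R : Type*} [CommSemiring R] (a b : R) (s k : ℕ) :
    ((C a * X + C b) ^ s).coeff k = b ^ (s - k) * s.choose k * a ^ k := by
  rw [show C a * X + C b = (X + C b).comp (C a * X) by simp [add_comp], ← pow_comp,
    comp_C_mul_X_coeff, coeff_X_add_C_pow]

theorem coeff_coeff_C_one_add_X_mul_X_add_C_X_pow_two_mul {R : Type*} [CommSemiring R] (n : ℕ) :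
    (((C (1 + X) * X + C X : R[X][X]) ^ (2 * n)).coeff n).coeff n = (2 * n).choose n := by
  rw [coeff_C_mul_X_add_C_pow, show 2 * n - n = n by omega, ← C_eq_natCast, mul_comm (X ^ n),
    mul_assoc, coeff_C_mul, coeff_X_pow_mul', if_pos le_rfl, Nat.sub_self, coeff_one_add_X_pow,
    Nat.choose_zero_right, Nat.cast_one, mul_one]

theorem stmt_19 (n : ℕ) :
    ∑ i ∈ Finset.range (n + 1), ∑ j ∈ Finset.range (n + 1),
        (-1 : ℤ) ^ (i + j) * (n.choose i) * (n.choose j) * ((i + j).choose n) ^ 2 =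
      ((2 * n).choose n) := by
  set P : ℤ[X][X] := (1 + X) * (1 + C X)
  have hneg : 1 - P = -(C (1 + X) * X + C X) := by
    simp only [P, C_add, C_1]; ring
  have hexpand : (1 - P) ^ (2 * n) = ∑ i ∈ range (n + 1), ∑ j ∈ range (n + 1),
      ((-1) ^ (i + j) * n.choose i * n.choose j : ℤ) • P ^ (i + j) := by
    rw [two_mul, pow_add, one_sub_pow_eq_sum, sum_mul_sum]
    refine sum_congr rfl fun i _ => sum_congr rfl fun j _ => ?_
    rw [smul_mul_smul_comm, ← pow_add]
    congr 1
    ring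
  calc _ = ((((1 - P) ^ (2 * n)).coeff n).coeff n) := by
        simp only [hexpand, finsetSum_coeff, coeff_smul, smul_eq_mul,
          coeff_coeff_one_add_X_mul_one_add_C_X_pow, P]
        refine sum_congr rfl fun i _ => sum_congr rfl fun j _ => ?_
        ring
    _ = _ := by
      rw [hneg, Even.neg_pow (even_two_mul n) (C (1 + X) * X + C X : ℤ[X][X]),
        coeff_coeff_C_one_add_X_mul_X_add_C_X_pow_two_mul]
end
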